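/- arXiv:2210.08850 — 5 statements merged into one kernel-verified Lean document; each statement's English description precedes it below -/
import Mathlib

section
/- Let (Z_n) be the simple symmetric random walk on ℤ started at x > 0. For any k with k and x-1 of the same parity, the probability that Z_j > 0 for all 1 ≤ j ≤ k and Z_k = 1 equals 2^{-(k+1)} * (2x/(k+1)) * binomial(k+1, (k+1-x)/2). -/
open Filter Asymptotics
open scoped Classical

noncomputable section

/-- Position after `j` steps of the simple symmetric random walk started at `x`,
driven by the first `n` coin flips `ε`. -/
def Zw {n : ℕ} (x : ℤ) (ε : Fin n → Bool) (j : ℕ) : ℤ :=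
  x + ∑ i ∈ Finset.univ.filter (fun i : Fin n => (i : ℕ) < j), (if ε i then (1 : ℤ) else -1)

/-- Probability of an event depending on the first `n` steps of the walk
(uniform measure on the `2^n` sequences of coin flips). -/
def wp (n : ℕ) (A : (Fin n → Bool) → Prop) : ℝ :=
  ((Finset.univ.filter A).card : ℝ) / 2 ^ n

/-- Binomial coefficient with integer lower index, interpreted as `0` out of range. -/
def bino (n : ℕ) (m : ℤ) : ℕ := if 0 ≤ m ∧ m ≤ n then n.choose m.toNat else 0

namespace SRWAux

lemma Zw_zero {n : ℕ} (x : ℤ) (ε : Fin n → Bool) : Zw x ε 0 = x := by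
  simp [Zw]

lemma Zw_succ {n : ℕ} (x : ℤ) (ε : Fin n → Bool) {j : ℕ} (hj : j < n) :
    Zw x ε (j+1) = Zw x ε j + (if ε ⟨j, hj⟩ then 1 else -1) := by
  unfold Zw
  have h : Finset.univ.filter (fun i : Fin n => (i:ℕ) < j+1)
      = insert ⟨j, hj⟩ (Finset.univ.filter (fun i : Fin n => (i:ℕ) < j)) := by
    ext i
    simp [Nat.lt_succ_iff_lt_or_eq, Fin.ext_iff, or_comm]
    exact le_iff_eq_or_lt
  rw [h, Finset.sum_insert (by simp)]
  ring

lemma Zw_stable {n : ℕ} (x : ℤ) (ε : Fin n → Bool) {j : ℕ} (h : n ≤ j) :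
    Zw x ε j = Zw x ε n := by
  unfold Zw
  congr 2
  ext i
  simp only [Finset.mem_filter, Finset.mem_univ, true_and]
  exact ⟨fun _ => i.isLt, fun _ => lt_of_lt_of_le i.isLt h⟩

lemma Zw_ge {n : ℕ} (x : ℤ) (ε : Fin n → Bool) (j : ℕ) : x - j ≤ Zw x ε j := by
  unfold Zw
  have h1 : ∀ i ∈ Finset.univ.filter (fun i : Fin n => (i:ℕ) < j),
      (-1 : ℤ) ≤ (if ε i then (1 : ℤ) else -1) := by
    intro i _; split <;> omega
  have h2 := Finset.sum_le_sum h1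
  have h3 : (Finset.univ.filter (fun i : Fin n => (i:ℕ) < j)).card ≤ j := by
    classical
    calc (Finset.univ.filter (fun i : Fin n => (i:ℕ) < j)).card
        ≤ (Finset.range j).card := by
          exact Finset.card_le_card_of_injOn (fun i => (i:ℕ))
            (fun i hi => by simp at hi ⊢; exact hi)
            (fun a _ b _ hab => Fin.ext hab)
      _ = j := Finset.card_range j
  simp only [Finset.sum_const, nsmul_eq_mul, mul_neg, mul_one] at h2
  have : -(j:ℤ) ≤ ∑ i ∈ Finset.univ.filter (fun i : Fin n => (i:ℕ) < j),
      (if ε i then (1 : ℤ) else -1) := by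
    refine le_trans ?_ h2
    have : ((Finset.univ.filter (fun i : Fin n => (i:ℕ) < j)).card : ℤ) ≤ (j:ℤ) := by
      exact_mod_cast h3
    omega
  omega

section
variable {n : ℕ}

def flipA (T : ℕ) (ε : Fin n → Bool) : Fin n → Bool :=
  fun i => if (i:ℕ) < T then ε i else !ε i

lemma flipA_flipA (T : ℕ) (ε : Fin n → Bool) : flipA T (flipA T ε) = ε := by
  funext i; unfold flipA; by_cases h : (i:ℕ) < T <;> simp [h]

lemma Zw_flip_le (x : ℤ) (T : ℕ) (ε : Fin n → Bool) {j : ℕ} (hjT : j ≤ T) :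
    Zw x (flipA T ε) j = Zw x ε j := by
  unfold Zw
  congr 1
  apply Finset.sum_congr rfl
  intro i hi
  simp only [Finset.mem_filter] at hi
  have : (i:ℕ) < T := lt_of_lt_of_le hi.2 hjT
  simp [flipA, this]

lemma Zw_flip_ge (x : ℤ) (T : ℕ) (ε : Fin n → Bool) {j : ℕ} (hTj : T ≤ j) :
    Zw x (flipA T ε) j = 2 * Zw x ε T - Zw x ε j := by
  classical
  unfold Zw
  have key : ∀ (f : Fin n → Bool) (j : ℕ),
      ∑ i ∈ Finset.univ.filter (fun i : Fin n => (i:ℕ) < j), (if f i then (1:ℤ) else -1)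
      = ∑ i ∈ (Finset.univ.filter (fun i : Fin n => (i:ℕ) < j)).filter (fun i : Fin n => (i:ℕ) < T),
          (if f i then (1:ℤ) else -1)
        + ∑ i ∈ (Finset.univ.filter (fun i : Fin n => (i:ℕ) < j)).filter (fun i : Fin n => ¬ (i:ℕ) < T),
          (if f i then (1:ℤ) else -1) :=
    fun f j => (Finset.sum_filter_add_sum_filter_not _ _ _).symm
  rw [key (flipA T ε) j, key ε j]
  have hsub : (Finset.univ.filter (fun i : Fin n => (i:ℕ) < j)).filter (fun i : Fin n => (i:ℕ) < T)
      = Finset.univ.filter (fun i : Fin n => (i:ℕ) < T) := by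
    ext i
    simp only [Finset.mem_filter, Finset.mem_univ, true_and]
    exact ⟨fun h => h.2, fun h => ⟨lt_of_lt_of_le h hTj, h⟩⟩
  have h1 : ∑ i ∈ (Finset.univ.filter (fun i : Fin n => (i:ℕ) < j)).filter (fun i : Fin n => (i:ℕ) < T),
      (if flipA T ε i then (1:ℤ) else -1)
      = ∑ i ∈ (Finset.univ.filter (fun i : Fin n => (i:ℕ) < j)).filter (fun i : Fin n => (i:ℕ) < T),
      (if ε i then (1:ℤ) else -1) := by
    apply Finset.sum_congr rfl
    intro i hi
    simp only [Finset.mem_filter] at hi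
    simp [flipA, hi.2]
  have h2 : ∑ i ∈ (Finset.univ.filter (fun i : Fin n => (i:ℕ) < j)).filter (fun i : Fin n => ¬ (i:ℕ) < T),
      (if flipA T ε i then (1:ℤ) else -1)
      = - ∑ i ∈ (Finset.univ.filter (fun i : Fin n => (i:ℕ) < j)).filter (fun i : Fin n => ¬ (i:ℕ) < T),
      (if ε i then (1:ℤ) else -1) := by
    rw [← Finset.sum_neg_distrib]
    apply Finset.sum_congr rfl
    intro i hi
    simp only [Finset.mem_filter] at hi
    simp only [flipA, if_neg hi.2]
    cases ε i <;> simp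
  rw [h1, h2, hsub]
  have h3 : ∑ i ∈ Finset.univ.filter (fun i : Fin n => (i:ℕ) < T), (if ε i then (1:ℤ) else -1)
      = Zw x ε T - x := by unfold Zw; ring
  have h4 := key ε j
  rw [hsub] at h4
  unfold Zw at *
  linarith [h4]

end
section
variable {n : ℕ}

lemma Zw_end (x : ℤ) (ε : Fin n → Bool) :
    Zw x ε n = x + 2 * ((Finset.univ.filter (fun i => ε i = true)).card : ℤ) - n := by
  unfold Zw
  have h0 : Finset.univ.filter (fun i : Fin n => (i:ℕ) < n) = Finset.univ := by
    apply Finset.filter_true_of_mem; intro i _; exact i.isLt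
  rw [h0]
  have h1 : ∀ i : Fin n, (if ε i then (1:ℤ) else -1) = 2 * (if ε i = true then (1:ℤ) else 0) - 1 := by
    intro i; cases ε i <;> simp
  rw [Finset.sum_congr rfl (fun i _ => h1 i), Finset.sum_sub_distrib, ← Finset.mul_sum,
    Finset.sum_boole, Finset.sum_const]
  simp [Finset.card_univ]
  ring

lemma card_end (x : ℤ) (y : ℤ) (t : ℕ) (ht : y - x + n = 2 * t) :
    (Finset.univ.filter (fun ε : Fin n → Bool => Zw x ε n = y)).card = n.choose t := by
  classical
  have key : ∀ ε : Fin n → Bool, Zw x ε n = y ↔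
      (Finset.univ.filter (fun i => ε i = true)).card = t := by
    intro ε
    rw [Zw_end]
    constructor
    · intro h
      have : 2 * ((Finset.univ.filter (fun i => ε i = true)).card : ℤ) = 2 * t := by omega
      exact_mod_cast (mul_left_cancel₀ (by norm_num) this)
    · intro h; rw [h]; omega
  rw [Finset.filter_congr (fun ε _ => by rw [key ε])]
  have hc : (Finset.powersetCard t (Finset.univ : Finset (Fin n))).card = n.choose t := by
    rw [Finset.card_powersetCard]; simp
  rw [← hc]
  refine Finset.card_nbij' (fun ε => Finset.univ.filter (fun i => ε i = true))
    (fun s => fun i => decide (i ∈ s)) ?_ ?_ ?_ ?_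
  · intro ε hε
    simp only [Finset.mem_coe, Finset.mem_filter, Finset.mem_univ, true_and] at hε
    simp [Finset.mem_powersetCard, hε]
  · intro s hs
    simp only [Finset.mem_coe, Finset.mem_powersetCard] at hs
    simp only [Finset.mem_coe, Finset.mem_filter, Finset.mem_univ, true_and]
    rw [← hs.2]
    congr 1
    ext i
    simp
  · intro ε hε
    funext i
    simp
  · intro s hs
    ext i
    simp

end

section
variable {n : ℕ}

lemma find_spec (x : ℤ) (hx : 0 < x) (ε : Fin n → Bool) (h : ∃ j, Zw x ε j ≤ 0) :
    1 ≤ Nat.find h ∧ Nat.find h ≤ n ∧ Zw x ε (Nat.find h) = 0 ∧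
      ∀ j < Nat.find h, 0 < Zw x ε j := by
  have hT0 : Zw x ε (Nat.find h) ≤ 0 := Nat.find_spec h
  have hmin : ∀ j < Nat.find h, 0 < Zw x ε j := by
    intro j hj
    have := Nat.find_min h hj
    omega
  have h1 : 1 ≤ Nat.find h := by
    rcases Nat.eq_zero_or_pos (Nat.find h) with h0 | h0
    · rw [h0, Zw_zero] at hT0; omega
    · exact h0
  have hn : Nat.find h ≤ n := by
    by_contra hc
    push_neg at hc
    have : Zw x ε n ≤ 0 := by
      rw [← Zw_stable x ε hc.le]; exact hT0
    have := Nat.find_min' h this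
    omega
  refine ⟨h1, hn, ?_, hmin⟩
  have hlt : Nat.find h - 1 < n := by omega
  have hsucc := Zw_succ x ε hlt
  have heq : Nat.find h - 1 + 1 = Nat.find h := by omega
  rw [heq] at hsucc
  have hprev := hmin (Nat.find h - 1) (by omega)
  split at hsucc <;> omega

def Fmap (x : ℤ) (ε : Fin n → Bool) : Fin n → Bool :=
  if h : ∃ j, Zw x ε j ≤ 0 then flipA (Nat.find h) ε else ε

lemma Fmap_spec (x : ℤ) (hx : 0 < x) (ε : Fin n → Bool) (h : ∃ j, Zw x ε j ≤ 0) :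
    Zw x (Fmap x ε) n = - Zw x ε n ∧ Fmap x (Fmap x ε) = ε ∧
      (∃ j, 1 ≤ j ∧ j ≤ n ∧ Zw x (Fmap x ε) j ≤ 0) := by
  obtain ⟨h1, hn, hZ0, hpos⟩ := find_spec x hx ε h
  have hF : Fmap x ε = flipA (Nat.find h) ε := dif_pos h
  set T := Nat.find h with hT
  have hflipT : Zw x (flipA T ε) T = 0 := by
    rw [Zw_flip_le x T ε le_rfl, hZ0]
  have h' : ∃ j, Zw x (flipA T ε) j ≤ 0 := ⟨T, le_of_eq hflipT⟩
  have hfind' : Nat.find h' = T := by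
    apply le_antisymm
    · exact Nat.find_min' h' (le_of_eq hflipT)
    · rw [Nat.le_find_iff]
      intro m hm
      rw [Zw_flip_le x T ε hm.le]
      have := hpos m hm
      omega
  constructor
  · rw [hF, Zw_flip_ge x T ε hn, hZ0]; ring
  constructor
  · rw [hF]
    have hF2 : Fmap x (flipA T ε) = flipA (Nat.find h') (flipA T ε) := dif_pos h'
    rw [hF2, hfind', flipA_flipA]
  · exact ⟨T, h1, hn, by rw [hF]; exact le_of_eq hflipT⟩

lemma card_refl (x : ℤ) (hx : 0 < x) :
    (Finset.univ.filter fun ε : Fin n → Bool =>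
        (∃ j, 1 ≤ j ∧ j ≤ n ∧ Zw x ε j ≤ 0) ∧ Zw x ε n = 1).card
    = (Finset.univ.filter fun ε : Fin n → Bool => Zw x ε n = -1).card := by
  refine Finset.card_nbij' (Fmap x) (Fmap x) ?_ ?_ ?_ ?_
  · intro ε hε
    simp only [Finset.mem_coe, Finset.mem_filter, Finset.mem_univ, true_and] at hε ⊢
    obtain ⟨⟨j, _, _, hj⟩, hend⟩ := hε
    obtain ⟨ha, -, -⟩ := Fmap_spec x hx ε ⟨j, hj⟩
    rw [ha, hend]
  · intro ε hε
    simp only [Finset.mem_coe, Finset.mem_filter, Finset.mem_univ, true_and] at hε ⊢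
    obtain ⟨ha, -, hc⟩ := Fmap_spec x hx ε ⟨n, by omega⟩
    exact ⟨hc, by rw [ha, hε]; norm_num⟩
  · intro ε hε
    simp only [Finset.mem_coe, Finset.mem_filter, Finset.mem_univ, true_and] at hε
    obtain ⟨⟨j, _, _, hj⟩, hend⟩ := hε
    exact (Fmap_spec x hx ε ⟨j, hj⟩).2.1
  · intro ε hε
    simp only [Finset.mem_coe, Finset.mem_filter, Finset.mem_univ, true_and] at hε
    exact (Fmap_spec x hx ε ⟨n, by omega⟩).2.1

end


lemma filter_irrel {α : Type*} (p : α → Prop) (h1 h2 : DecidablePred p) (s : Finset α) :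
    @Finset.filter α p h1 s = @Finset.filter α p h2 s := by
  congr 1

lemma filter_univ_eq_empty {α : Type*} [Fintype α] {p : α → Prop} {d : DecidablePred p}
    (h : ∀ a, ¬ p a) : @Finset.filter α p d Finset.univ = ∅ := by
  ext a
  simp only [Finset.mem_filter, Finset.notMem_empty, iff_false, not_and]
  exact fun _ hc => h a hc

lemma filter_disjoint_univ {α : Type*} [Fintype α] {p q : α → Prop}
    {d1 : DecidablePred p} {d2 : DecidablePred q}
    (h : ∀ a, p a → q a → False) :
    Disjoint (@Finset.filter α p d1 Finset.univ) (@Finset.filter α q d2 Finset.univ) := by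
  rw [Finset.disjoint_left]
  intro a ha hb
  simp only [Finset.mem_filter] at ha hb
  exact h a ha.2 hb.2

lemma wp_eq {n : ℕ} (A : (Fin n → Bool) → Prop) (d : DecidablePred A) (r : ℝ)
    (h : ((@Finset.filter _ A d Finset.univ).card : ℝ) = r) : wp n A = r / 2 ^ n := by
  unfold wp
  rw [filter_irrel A _ d, h]

end SRWAux

open SRWAux in
/-- Reflection principle: for the walk started at `x > 0` and `k` of the same parity as
`x - 1`, `P_x(min_{1≤j≤k} Z_j > 0, Z_k = 1) = 2^{-(k+1)} (2x/(k+1)) C(k+1, (k+1-x)/2)`. -/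
theorem srw_reflection_to_one (x : ℤ) (hx : 0 < x) (k : ℕ)
    (hpar : Even ((k : ℤ) - (x - 1))) :
    wp k (fun ε => (∀ j, 1 ≤ j → j ≤ k → 0 < Zw x ε j) ∧ Zw x ε k = 1)
      = (1 / 2 : ℝ) ^ (k + 1) * (2 * (x : ℝ) / (k + 1))
          * (bino (k + 1) (((k : ℤ) + 1 - x) / 2) : ℝ) := by
  obtain ⟨t, ht⟩ := hpar
  have ht2 : (k:ℤ) + 1 - x = 2 * t := by linarith
  have hdiv : ((k:ℤ) + 1 - x) / 2 = t := by omega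
  rw [hdiv]
  rcases lt_or_ge t 0 with hneg | hpos
  · -- x > k + 1 : both sides vanish
    have hb : bino (k+1) t = 0 := by
      unfold bino
      rw [if_neg]
      push_neg
      intro h
      omega
    have hempty : ((Finset.univ.filter fun ε : Fin k → Bool =>
        (∀ j, 1 ≤ j → j ≤ k → 0 < Zw x ε j) ∧ Zw x ε k = 1).card : ℝ) = 0 := by
      have he : (Finset.univ.filter fun ε : Fin k → Bool =>
          (∀ j, 1 ≤ j → j ≤ k → 0 < Zw x ε j) ∧ Zw x ε k = 1) = ∅ :=
        filter_univ_eq_empty (fun ε hg => by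
          have h1 := Zw_ge x ε k
          have h2 := hg.2
          omega)
      rw [he]
      simp
    rw [hb, wp_eq _ _ 0 hempty]
    simp
  · obtain ⟨u, hut⟩ : ∃ u : ℕ, (u:ℤ) = t := ⟨t.toNat, Int.toNat_of_nonneg hpos⟩
    have hxu : x = (k:ℤ) + 1 - 2*u := by omega
    have hub' : 2*u ≤ k := by omega
    have hbino : (bino (k+1) t) = (k+1).choose u := by
      unfold bino
      rw [if_pos ⟨hpos, by omega⟩]
      congr 1
      omega
    have hend1 : (Finset.univ.filter fun ε : Fin k → Bool => Zw x ε k = 1).card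
        = k.choose u := card_end x 1 u (by omega)
    have hgood_iff : ∀ ε : Fin k → Bool,
        ((∀ j, 1 ≤ j → j ≤ k → 0 < Zw x ε j) ∧ Zw x ε k = 1)
          ↔ (Zw x ε k = 1 ∧ ¬ ∃ j, 1 ≤ j ∧ j ≤ k ∧ Zw x ε j ≤ 0) := by
      intro ε
      constructor
      · rintro ⟨hall, he⟩
        refine ⟨he, ?_⟩
        rintro ⟨j, hj1, hjk, hj⟩
        have := hall j hj1 hjk
        omega
      · rintro ⟨he, hall⟩
        refine ⟨fun j hj1 hjk => ?_, he⟩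
        by_contra hcon
        exact hall ⟨j, hj1, hjk, by omega⟩
    have hdisj : Disjoint
        (Finset.univ.filter fun ε : Fin k → Bool =>
          (∃ j, 1 ≤ j ∧ j ≤ k ∧ Zw x ε j ≤ 0) ∧ Zw x ε k = 1)
        (Finset.univ.filter fun ε : Fin k → Bool =>
          (∀ j, 1 ≤ j → j ≤ k → 0 < Zw x ε j) ∧ Zw x ε k = 1) := by
      apply filter_disjoint_univ
      rintro ε ⟨⟨j, hj1, hjk, hj⟩, -⟩ ⟨hall, -⟩
      have := hall j hj1 hjk
      omega
    have hunion : (Finset.univ.filter fun ε : Fin k → Bool =>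
          (∃ j, 1 ≤ j ∧ j ≤ k ∧ Zw x ε j ≤ 0) ∧ Zw x ε k = 1)
        ∪ (Finset.univ.filter fun ε : Fin k → Bool =>
          (∀ j, 1 ≤ j → j ≤ k → 0 < Zw x ε j) ∧ Zw x ε k = 1)
        = Finset.univ.filter fun ε : Fin k → Bool => Zw x ε k = 1 := by
      ext ε
      simp only [Finset.mem_union, Finset.mem_filter, Finset.mem_univ, true_and]
      constructor
      · rintro (⟨-, he⟩ | hg)
        · exact he
        · exact hg.2
      · intro he
        by_cases hb' : ∃ j, 1 ≤ j ∧ j ≤ k ∧ Zw x ε j ≤ 0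
        · exact Or.inl ⟨hb', he⟩
        · exact Or.inr ((hgood_iff ε).mpr ⟨he, hb'⟩)
    have hsplit : (Finset.univ.filter fun ε : Fin k → Bool =>
          (∃ j, 1 ≤ j ∧ j ≤ k ∧ Zw x ε j ≤ 0) ∧ Zw x ε k = 1).card
        + (Finset.univ.filter fun ε : Fin k → Bool =>
          (∀ j, 1 ≤ j → j ≤ k → 0 < Zw x ε j) ∧ Zw x ε k = 1).card
        = k.choose u := by
      rw [← hend1, ← hunion, Finset.card_union_of_disjoint hdisj]
    have hbad : (Finset.univ.filter fun ε : Fin k → Bool =>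
          (∃ j, 1 ≤ j ∧ j ≤ k ∧ Zw x ε j ≤ 0) ∧ Zw x ε k = 1).card
        = (Finset.univ.filter fun ε : Fin k → Bool => Zw x ε k = -1).card := by
      have h := card_refl (n := k) x hx
      convert h using 2
    by_cases hu0 : u = 0
    · -- x = k + 1 : the all-down path
      have hbadzero : (Finset.univ.filter fun ε : Fin k → Bool =>
          (∃ j, 1 ≤ j ∧ j ≤ k ∧ Zw x ε j ≤ 0) ∧ Zw x ε k = 1).card = 0 := by
        rw [Finset.card_eq_zero]
        apply filter_univ_eq_empty
        rintro ε ⟨⟨j, hj1, hjk, hj⟩, -⟩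
        have := Zw_ge x ε j
        omega
      have hgoodcard : ((Finset.univ.filter fun ε : Fin k → Bool =>
          (∀ j, 1 ≤ j → j ≤ k → 0 < Zw x ε j) ∧ Zw x ε k = 1).card : ℝ) = 1 := by
        have hc0 : k.choose u = 1 := by rw [hu0]; exact Nat.choose_zero_right k
        have : (Finset.univ.filter fun ε : Fin k → Bool =>
          (∀ j, 1 ≤ j → j ≤ k → 0 < Zw x ε j) ∧ Zw x ε k = 1).card = 1 := by omega
        exact_mod_cast this
      rw [wp_eq _ _ 1 hgoodcard, hbino, hu0, Nat.choose_zero_right]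
      have hxR : (x:ℝ) = (k:ℝ) + 1 := by
        have : x = (k:ℤ) + 1 := by omega
        exact_mod_cast this
      have hk1 : ((k:ℝ)+1) ≠ 0 := by positivity
      rw [hxR]
      rw [div_pow, one_pow]
      field_simp
      ring
    · have hu1 : 1 ≤ u := Nat.pos_of_ne_zero hu0
      have hcast : ((u-1:ℕ):ℤ) = (u:ℤ) - 1 := by omega
      have hendm1 : (Finset.univ.filter fun ε : Fin k → Bool => Zw x ε k = -1).card
          = k.choose (u-1) := card_end x (-1) (u-1) (by rw [hcast]; omega)
      have hgood : ((Finset.univ.filter fun ε : Fin k → Bool =>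
          (∀ j, 1 ≤ j → j ≤ k → 0 < Zw x ε j) ∧ Zw x ε k = 1).card : ℝ)
          = k.choose u - k.choose (u-1) := by
        rw [hbad, hendm1] at hsplit
        have h1 : k.choose (u-1) ≤ k.choose u := by omega
        have h2 : (Finset.univ.filter fun ε : Fin k → Bool =>
            (∀ j, 1 ≤ j → j ≤ k → 0 < Zw x ε j) ∧ Zw x ε k = 1).card
            = k.choose u - k.choose (u-1) := by omega
        rw [h2]
        push_cast [h1]
        ring
      have hsub : u - 1 + 1 = u := by omega
      have p1 : (k+1) * k.choose (u-1) = (k+1).choose u * u := by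
        have h := Nat.add_one_mul_choose_eq k (u-1)
        simp only [Nat.succ_eq_add_one, hsub] at h
        exact h
      have p2 : (k+1).choose u = k.choose (u-1) + k.choose u := by
        have h := Nat.choose_succ_succ k (u-1)
        simp only [Nat.succ_eq_add_one, hsub] at h
        exact h
      have hxR : (x:ℝ) = (k:ℝ) + 1 - 2*u := by exact_mod_cast hxu
      have p1R : ((k:ℝ)+1) * k.choose (u-1) = ((k.choose (u-1) : ℝ) + k.choose u) * u := by
        have h := p1
        rw [p2] at h
        exact_mod_cast h
      have p2R : ((k+1).choose u : ℝ) = k.choose (u-1) + k.choose u := by exact_mod_cast p2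
      have key : ((k:ℝ)+1) * ((k.choose u : ℝ) - k.choose (u-1)) = x * (k+1).choose u := by
        rw [hxR, p2R]
        linear_combination (-2 : ℝ) * p1R
      rw [wp_eq _ _ _ hgood, hbino]
      have hk1 : ((k:ℝ)+1) ≠ 0 := by positivity
      have h2k : (2:ℝ)^k ≠ 0 := by positivity
      rw [div_pow, one_pow]
      field_simp
      linear_combination (2 * (2:ℝ)^k) * key

end
end

section
/- Consider the Markov chain X on ℤ² with transitions: on the open cones K = {(x,y) : xy ≠ 0} it is a simple random walk (each neighbor with probability 1/4); on the axes K^c \ {(0,0)}, from (i,0) with i > 0 it moves to (i+1,0), (i,1), (i,−1) each with probability 1/(4 i^α) and to (i−1,0) with probability 1 − 3/(4 i^α), symmetrically on other half-axes; from (0,0) each neighbor has probability 1/4. Let ρ = inf{k > 0 : X_k ∈ K}. If α > 1 then there exists a constant C with 0 < C < 1 such that P_x(X_ρ = (1,1)) > C for every x ∈ K^c. -/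
open MeasureTheory Filter Asymptotics
open scoped Classical ENNReal

noncomputable section

/-- The four open cones: both coordinates nonzero. -/
def coneK : Set (ℤ × ℤ) := {z | z.1 ≠ 0 ∧ z.2 ≠ 0}

/-- The axes (complement of the cones). -/
def axesKc : Set (ℤ × ℤ) := {z | z.1 = 0 ∨ z.2 = 0}

/-- Nearest-neighbour adjacency on `ℤ²`. -/
def adj (z w : ℤ × ℤ) : Prop := (w.1 - z.1).natAbs + (w.2 - z.2).natAbs = 1

/-- Maximum norm on `ℤ²`. -/
def onorm (z : ℤ × ℤ) : ℕ := max z.1.natAbs z.2.natAbs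

/-- Transition probabilities of the perturbed walk: simple random walk on the cones and
at the origin; on the axes, at distance `i > 0` from the origin, probability `1/(4 i^α)`
to step outward or sideways and `1 - 3/(4 i^α)` to step toward the origin. -/
noncomputable def q (α : ℝ) (z w : ℤ × ℤ) : ℝ :=
  if z.2 = 0 ∧ z.1 ≠ 0 then
    (if w = (z.1 + Int.sign z.1, 0) ∨ w = (z.1, 1) ∨ w = (z.1, -1) then
      1 / (4 * (z.1.natAbs : ℝ) ^ α)
    else if w = (z.1 - Int.sign z.1, 0) then
      1 - 3 / (4 * (z.1.natAbs : ℝ) ^ α)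
    else 0)
  else if z.1 = 0 ∧ z.2 ≠ 0 then
    (if w = (0, z.2 + Int.sign z.2) ∨ w = (1, z.2) ∨ w = (-1, z.2) then
      1 / (4 * (z.2.natAbs : ℝ) ^ α)
    else if w = (0, z.2 - Int.sign z.2) then
      1 - 3 / (4 * (z.2.natAbs : ℝ) ^ α)
    else 0)
  else (if adj z w then 1 / 4 else 0)

/-- A Markov chain on `ℤ²` with transition kernel `q α`: a family of probability
measures `P x` (the chain started at `x`) whose finite-dimensional distributions are
products of the transition probabilities. -/
structure PerturbedWalk (α : ℝ) (Ω : Type*) [MeasurableSpace Ω] where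
  X : ℕ → Ω → ℤ × ℤ
  P : ℤ × ℤ → Measure Ω
  meas : ∀ n, Measurable (X n)
  prob : ∀ x, IsProbabilityMeasure (P x)
  fdd : ∀ (x : ℤ × ℤ) (n : ℕ) (path : ℕ → ℤ × ℤ), path 0 = x →
    (P x {ω | ∀ i ≤ n, X i ω = path i}).toReal
      = ∏ i ∈ Finset.range n, q α (path i) (path (i + 1))

/-- `n` is the first time (after `0`) at which the walk is in the cones `K`;
i.e. `ρ = n` where `ρ` is the entrance time into `K`. -/
def entersConeAt {Ω : Type*} (X : ℕ → Ω → ℤ × ℤ) (n : ℕ) (ω : Ω) : Prop :=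
  0 < n ∧ X n ω ∈ coneK ∧ ∀ m, 0 < m → m < n → X m ω ∉ coneK

/-- `n` is the first time (after `0`) at which the walk is on the axes `K^c`;
i.e. `η = n` where `η` is the entrance time into `K^c`. -/
def entersAxesAt {Ω : Type*} (X : ℕ → Ω → ℤ × ℤ) (n : ℕ) (ω : Ω) : Prop :=
  0 < n ∧ X n ω ∈ axesKc ∧ ∀ m, 0 < m → m < n → X m ω ∉ axesKc

/-!
From any point `x` of the axes the chain can run straight along its half-axis to the origin, then
step to `(1, 0)` and to `(1, 1)`. This path has probability `(1/16) ∏_{j ≤ |x|} (1 - 3 / (4 j^α))`,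
and since `1 - t ≥ exp (-4 t)` for `t ≤ 3/4` and `∑ j^(-α) < ∞` for `α > 1`, these products are
bounded below by `exp (-4 ∑_j 3 / (4 j^α)) > 0` uniformly in `x`.
-/

open Real Finset

theorem exp_neg_four_mul_le_one_sub {t : ℝ} (h0 : 0 ≤ t) (h1 : t ≤ 3 / 4) :
    exp (-(4 * t)) ≤ 1 - t := by
  have hpos : 0 < 1 - t := by linarith
  rw [← le_log_iff_exp_le hpos]
  calc -(4 * t) ≤ -(t / (1 - t)) := by
        rw [neg_le_neg_iff, div_le_iff₀ hpos]; nlinarith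
    _ = 1 - (1 - t)⁻¹ := by field_simp; ring
    _ ≤ log (1 - t) := one_sub_inv_le_log_of_pos hpos

theorem exp_neg_four_mul_sum_le_prod_one_sub {ι : Type*} (s : Finset ι) {f : ι → ℝ}
    (h0 : ∀ i ∈ s, 0 ≤ f i) (h1 : ∀ i ∈ s, f i ≤ 3 / 4) :
    exp (-(4 * ∑ i ∈ s, f i)) ≤ ∏ i ∈ s, (1 - f i) := by
  rw [mul_sum, ← sum_neg_distrib, exp_sum]
  exact prod_le_prod (fun i _ => (exp_pos _).le)
    fun i hi => exp_neg_four_mul_le_one_sub (h0 i hi) (h1 i hi)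

theorem exists_pos_le_prod_range_one_sub {f : ℕ → ℝ} (hf : Summable f) (h0 : ∀ i, 0 ≤ f i)
    (h1 : ∀ i, f i ≤ 3 / 4) : ∃ c > 0, ∀ n, c ≤ ∏ i ∈ range n, (1 - f i) := by
  refine ⟨exp (-(4 * ∑' i, f i)), exp_pos _, fun n => ?_⟩
  calc exp (-(4 * ∑' i, f i)) ≤ exp (-(4 * ∑ i ∈ range n, f i)) := by
        gcongr; exact hf.sum_le_tsum _ fun i _ => h0 i
    _ ≤ ∏ i ∈ range n, (1 - f i) :=
        exp_neg_four_mul_sum_le_prod_one_sub _ (fun i _ => h0 i) fun i _ => h1 i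

-- The probability of not stepping toward the origin from distance `i` on an axis.
def axisLeak (α : ℝ) (i : ℕ) : ℝ := 3 / (4 * (i : ℝ) ^ α)

theorem axisLeak_nonneg (α : ℝ) (i : ℕ) : 0 ≤ axisLeak α i := by
  unfold axisLeak; positivity

theorem axisLeak_le (α : ℝ) {i : ℕ} (hi : 1 ≤ i) (hα : 0 ≤ α) : axisLeak α i ≤ 3 / 4 := by
  have : 1 ≤ (i : ℝ) ^ α := one_le_rpow (by exact_mod_cast hi) hα
  unfold axisLeak
  rw [div_le_div_iff₀ (by positivity) (by norm_num)]
  linarith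

theorem summable_axisLeak {α : ℝ} (hα : 1 < α) : Summable (axisLeak α) := by
  refine ((summable_nat_rpow_inv.mpr hα).mul_left (3 / 4)).congr fun i => ?_
  rw [axisLeak, div_mul_eq_div_div, div_eq_mul_inv _ ((i : ℝ) ^ α)]

def axisPoint (x : ℤ × ℤ) (r : ℕ) : ℤ × ℤ := (x.1.sign * r, x.2.sign * r)

theorem axisPoint_zero (x : ℤ × ℤ) : axisPoint x 0 = (0, 0) := by
  simp [axisPoint]

theorem axisPoint_onorm {x : ℤ × ℤ} (hx : x ∈ axesKc) : axisPoint x (onorm x) = x := by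
  rcases hx with h | h <;> simp [axisPoint, onorm, h, Int.sign_mul_abs, Prod.ext_iff]

theorem axisPoint_mem_axesKc {x : ℤ × ℤ} (hx : x ∈ axesKc) (r : ℕ) : axisPoint x r ∈ axesKc := by
  rcases hx with h | h
  · exact .inl (by simp [axisPoint, h])
  · exact .inr (by simp [axisPoint, h])

theorem q_inward_horizontal (α : ℝ) {a : ℤ} (ha : a ≠ 0) :
    q α (a, 0) (a - a.sign, 0) = 1 - axisLeak α a.natAbs := by
  have hs : a.sign ≠ 0 := by simpa using ha
  rw [q, if_pos ⟨rfl, ha⟩, if_neg (by simp; omega), if_pos rfl, axisLeak]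

theorem q_inward_vertical (α : ℝ) {a : ℤ} (ha : a ≠ 0) :
    q α (0, a) (0, a - a.sign) = 1 - axisLeak α a.natAbs := by
  have hs : a.sign ≠ 0 := by simpa using ha
  rw [q, if_neg (by simp), if_pos ⟨rfl, ha⟩, if_neg (by simp; omega), if_pos rfl, axisLeak]

theorem sign_and_natAbs_of_sign_mul_succ {a : ℤ} (ha : a ≠ 0) (r : ℕ) :
    (a.sign * (r + 1 : ℕ)).sign = a.sign ∧ (a.sign * (r + 1 : ℕ)).natAbs = r + 1 := by
  simp [Int.sign_mul, Int.natAbs_mul, Int.natAbs_sign_of_ne_zero ha]; omega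

theorem q_axisPoint_succ (α : ℝ) {x : ℤ × ℤ} (hx : x ∈ axesKc) (hx0 : x ≠ 0) (r : ℕ) :
    q α (axisPoint x (r + 1)) (axisPoint x r) = 1 - axisLeak α (r + 1) := by
  rcases hx with h | h
  · have h2 : x.2 ≠ 0 := fun h2 => hx0 (Prod.ext h h2)
    obtain ⟨hsign, habs⟩ := sign_and_natAbs_of_sign_mul_succ h2 r
    have e1 : axisPoint x (r + 1) = (0, x.2.sign * (r + 1 : ℕ)) := by simp [axisPoint, h]
    have e2 : axisPoint x r = (0, x.2.sign * (r + 1 : ℕ) - (x.2.sign * (r + 1 : ℕ)).sign) := by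
      rw [hsign]; simp only [axisPoint, h, Int.sign_zero, zero_mul]; push_cast; ring_nf
    rw [e1, e2, q_inward_vertical α (mul_ne_zero (by simpa using h2) (by omega)), habs]
  · have h1 : x.1 ≠ 0 := fun h1 => hx0 (Prod.ext h1 h)
    obtain ⟨hsign, habs⟩ := sign_and_natAbs_of_sign_mul_succ h1 r
    have e1 : axisPoint x (r + 1) = (x.1.sign * (r + 1 : ℕ), 0) := by simp [axisPoint, h]
    have e2 : axisPoint x r = (x.1.sign * (r + 1 : ℕ) - (x.1.sign * (r + 1 : ℕ)).sign, 0) := by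
      rw [hsign]; simp only [axisPoint, h, Int.sign_zero, zero_mul]; push_cast; ring_nf
    rw [e1, e2, q_inward_horizontal α (mul_ne_zero (by simpa using h1) (by omega)), habs]

def pathToOneOne (x : ℤ × ℤ) (k : ℕ) : ℤ × ℤ :=
  if k ≤ onorm x then axisPoint x (onorm x - k) else if k = onorm x + 1 then (1, 0) else (1, 1)

theorem pathToOneOne_zero (x : ℤ × ℤ) (hx : x ∈ axesKc) : pathToOneOne x 0 = x := by
  simp [pathToOneOne, axisPoint_onorm hx]

theorem pathToOneOne_mem_axesKc {x : ℤ × ℤ} (hx : x ∈ axesKc) {k : ℕ} (hk : k ≤ onorm x + 1) :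
    pathToOneOne x k ∈ axesKc := by
  unfold pathToOneOne
  split_ifs
  · exact axisPoint_mem_axesKc hx _
  · exact .inr rfl
  · omega

theorem pathToOneOne_onorm_add_two (x : ℤ × ℤ) : pathToOneOne x (onorm x + 2) = (1, 1) := by
  simp [pathToOneOne]

theorem prod_q_pathToOneOne (α : ℝ) {x : ℤ × ℤ} (hx : x ∈ axesKc) :
    ∏ k ∈ range (onorm x + 2), q α (pathToOneOne x k) (pathToOneOne x (k + 1))
      = (∏ j ∈ range (onorm x), (1 - axisLeak α (j + 1))) / 16 := by
  have hinward : ∀ k ∈ range (onorm x),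
      q α (pathToOneOne x k) (pathToOneOne x (k + 1)) = 1 - axisLeak α (onorm x - 1 - k + 1) := by
    intro k hk
    have hk := mem_range.mp hk
    have hx0 : x ≠ 0 := by rintro rfl; simp [onorm] at hk
    rw [pathToOneOne, if_pos hk.le, pathToOneOne, if_pos (show k + 1 ≤ onorm x by omega),
      ← q_axisPoint_succ α hx hx0]
    congr 2 <;> omega
  have hstart : pathToOneOne x (onorm x) = (0, 0) := by
    simp [pathToOneOne, axisPoint_zero]
  have hmid : pathToOneOne x (onorm x + 1) = (1, 0) := by simp [pathToOneOne]
  rw [prod_range_succ, prod_range_succ, prod_congr rfl hinward,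
    prod_range_reflect (fun j => 1 - axisLeak α (j + 1)), hstart, hmid, pathToOneOne_onorm_add_two]
  norm_num [q, adj]
  ring

theorem setOf_path_subset_entersConeAt {Ω : Type*} (X : ℕ → Ω → ℤ × ℤ) (path : ℕ → ℤ × ℤ)
    {n : ℕ} (hn : 0 < n) (hcone : path n ∈ coneK) (haxes : ∀ m, 0 < m → m < n → path m ∉ coneK) :
    {ω | ∀ i ≤ n, X i ω = path i} ⊆ {ω | ∃ m, entersConeAt X m ω ∧ X m ω = path n} := by
  intro ω hω
  have hX : ∀ m ≤ n, X m ω = path m := hω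
  exact ⟨n, ⟨hn, hX n le_rfl ▸ hcone, fun m hm hmn => hX m hmn.le ▸ haxes m hm hmn⟩, hX n le_rfl⟩

/-- For `α > 1`, there is `0 < C < 1` with `P_x(X_ρ = (1,1)) > C` for every `x ∈ K^c`. -/
theorem exit_at_one_one_unif (α : ℝ) (hα : 1 < α) {Ω : Type*} [MeasurableSpace Ω]
    (W : PerturbedWalk α Ω) :
    ∃ C : ℝ, 0 < C ∧ C < 1 ∧ ∀ x ∈ axesKc,
      C < (W.P x {ω | ∃ n, entersConeAt W.X n ω ∧ W.X n ω = (1, 1)}).toReal := by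
  obtain ⟨c, hc0, hc⟩ := exists_pos_le_prod_range_one_sub
    ((summable_nat_add_iff 1).mpr (summable_axisLeak hα)) (fun j => axisLeak_nonneg α (j + 1))
    (fun j => axisLeak_le α (Nat.le_add_left 1 j) (by linarith))
  have hc1 : c ≤ 1 := by simpa using hc 0
  refine ⟨c / 32, by positivity, by linarith, fun x hx => ?_⟩
  have := W.prob x
  have hsub := setOf_path_subset_entersConeAt W.X (pathToOneOne x) (n := onorm x + 2) (by omega)
    (by simp [pathToOneOne_onorm_add_two, coneK])
    (fun m _ hm hK => (pathToOneOne_mem_axesKc hx (by omega)).elim hK.1 hK.2)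
  rw [pathToOneOne_onorm_add_two] at hsub
  calc c / 32 < c / 16 := by linarith
    _ ≤ (∏ j ∈ range (onorm x), (1 - axisLeak α (j + 1))) / 16 := by gcongr; exact hc _
    _ = (W.P x {ω | ∀ i ≤ onorm x + 2, W.X i ω = pathToOneOne x i}).toReal := by
        rw [W.fdd x _ _ (pathToOneOne_zero x hx), prod_q_pathToOneOne α hx]
    _ ≤ _ := ENNReal.toReal_mono (measure_ne_top _ _) (measure_mono hsub)

end
end

section
/- For the perturbed walk with α > 1, there exist constants c_+ > c_- > 0 such that for all integers i > 1, 1 + c_- i^{−α} ≤ 4 i^α · P_{(0,i)}(X_ρ = (1,i)) ≤ 1 + c_+ i^{−α}, where ρ is the first entrance time into the cones K. -/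
open MeasureTheory Filter Asymptotics
open scoped Classical ENNReal

noncomputable section

/-! ### auxiliary development -/

lemma natAbs_cast_real (m : ℤ) (hm : 0 ≤ m) : ((m.natAbs : ℝ)) = (m : ℝ) := by
  rw [Nat.cast_natAbs]
  exact_mod_cast abs_of_nonneg hm

lemma one_le_pow_natAbs (α : ℝ) (hα : 0 ≤ α) (m : ℤ) (hm : m ≠ 0) :
    (1:ℝ) ≤ (m.natAbs : ℝ) ^ α := by
  apply Real.one_le_rpow _ hα
  have : 1 ≤ m.natAbs := Int.natAbs_pos.mpr hm
  exact_mod_cast this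

lemma q_nonneg (α : ℝ) (hα : 0 ≤ α) (z w : ℤ × ℤ) : 0 ≤ q α z w := by
  unfold q
  have key : ∀ m : ℤ, m ≠ 0 → 0 ≤ 1 - 3 / (4 * (m.natAbs : ℝ) ^ α) := by
    intro m hm
    have h1 := one_le_pow_natAbs α hα m hm
    have h2 : (3:ℝ) / (4 * (m.natAbs : ℝ) ^ α) ≤ 3 / 4 := by
      apply div_le_div_of_nonneg_left (by norm_num) (by norm_num) (by linarith)
    linarith
  split_ifs with h1 h2 h3 h4 h5 h6 h7
  · positivity
  · exact key _ h1.2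
  · norm_num
  · positivity
  · exact key _ h4.2
  · norm_num
  · norm_num
  · norm_num

lemma q_vert (α : ℝ) (m : ℤ) (hm : m ≠ 0) (a : ℤ × ℤ) :
    q α (0, m) a =
      (if a = (0, m + Int.sign m) ∨ a = (1, m) ∨ a = (-1, m) then
        1 / (4 * (m.natAbs : ℝ) ^ α)
      else if a = (0, m - Int.sign m) then
        1 - 3 / (4 * (m.natAbs : ℝ) ^ α)
      else 0) := by
  unfold q
  rw [if_neg (fun h => h.2 rfl), if_pos ⟨rfl, hm⟩]

lemma q_vert_supp (α : ℝ) (m : ℤ) (hm : m ≠ 0) (a : ℤ × ℤ)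
    (ha : ¬(a = (0, m + Int.sign m) ∨ a = (1, m) ∨ a = (-1, m) ∨ a = (0, m - Int.sign m))) :
    q α (0, m) a = 0 := by
  push_neg at ha
  rw [q_vert α m hm a, if_neg (by tauto), if_neg (by tauto)]

lemma q_vert_up (α : ℝ) (m : ℤ) (hm : 0 < m) :
    q α (0, m) (0, m + 1) = 1 / (4 * (m : ℝ) ^ α) := by
  rw [q_vert α m hm.ne', if_pos (by left; simp [Int.sign_eq_one_of_pos hm]),
    natAbs_cast_real m hm.le]

lemma q_vert_side (α : ℝ) (m : ℤ) (hm : 0 < m) :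
    q α (0, m) (1, m) = 1 / (4 * (m : ℝ) ^ α) := by
  rw [q_vert α m hm.ne', if_pos (by right; left; rfl), natAbs_cast_real m hm.le]

lemma q_vert_down (α : ℝ) (m : ℤ) (hm : 0 < m) :
    q α (0, m) (0, m - 1) = 1 - 3 / (4 * (m : ℝ) ^ α) := by
  rw [q_vert α m hm.ne',
    if_neg (by simp [Prod.ext_iff, Int.sign_eq_one_of_pos hm]; omega),
    if_pos (by simp [Int.sign_eq_one_of_pos hm]), natAbs_cast_real m hm.le]

/-- the potential `g`: product of `1/(2 k^α)` for `j ≤ k < i` -/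
noncomputable def gg (α : ℝ) (i j : ℤ) : ℝ := ∏ k ∈ Finset.Ico j i, (1 / (2 * (k : ℝ) ^ α))

lemma gg_stop (α : ℝ) (i j : ℤ) (h : i ≤ j) : gg α i j = 1 := by
  unfold gg
  rw [Finset.Ico_eq_empty (by omega), Finset.prod_empty]

lemma gg_pos (α : ℝ) (i j : ℤ) (hj : 1 ≤ j) : 0 < gg α i j := by
  unfold gg
  apply Finset.prod_pos
  intro k hk
  rw [Finset.mem_Ico] at hk
  have : (0:ℝ) < (k:ℝ) := by exact_mod_cast (by omega : (0:ℤ) < k)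
  positivity

lemma gg_succ (α : ℝ) (i j : ℤ) (hj : j < i) :
    gg α i j = (1 / (2 * (j : ℝ) ^ α)) * gg α i (j + 1) := by
  unfold gg
  have h1 : Finset.Ico (j+1) i = Finset.Ioo j i := by
    ext x; simp only [Finset.mem_Ico, Finset.mem_Ioo]; omega
  rw [h1, ← Finset.Ioo_insert_left hj, Finset.prod_insert (by simp)]

lemma q_horiz (α : ℝ) (m : ℤ) (hm : m ≠ 0) (a : ℤ × ℤ) :
    q α (m, 0) a =
      (if a = (m + Int.sign m, 0) ∨ a = (m, 1) ∨ a = (m, -1) then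
        1 / (4 * (m.natAbs : ℝ) ^ α)
      else if a = (m - Int.sign m, 0) then
        1 - 3 / (4 * (m.natAbs : ℝ) ^ α)
      else 0) := by
  unfold q
  rw [if_pos ⟨rfl, hm⟩]

lemma q_orig (α : ℝ) (a : ℤ × ℤ) :
    q α (0, 0) a = if adj (0, 0) a then 1 / 4 else 0 := by
  unfold q
  rw [if_neg (fun h => h.2 rfl), if_neg (fun h => h.2 rfl)]

/-- the potential function `f` -/
noncomputable def ff (α : ℝ) (i : ℤ) (z : ℤ × ℤ) : ℝ :=
  if z.1 = 0 ∧ 1 ≤ z.2 then gg α i z.2 else if z.1 = 0 ∨ z.2 = 0 then gg α i 1 else 0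

lemma ff_nonneg (α : ℝ) (i : ℤ) (z : ℤ × ℤ) : 0 ≤ ff α i z := by
  unfold ff
  split_ifs with h1 h2
  · exact (gg_pos α i z.2 h1.2).le
  · exact (gg_pos α i 1 le_rfl).le
  · exact le_refl 0

lemma ff_vert (α : ℝ) (i j : ℤ) (hj : 1 ≤ j) : ff α i (0, j) = gg α i j := by
  unfold ff; rw [if_pos ⟨rfl, hj⟩]

lemma ff_vneg (α : ℝ) (i j : ℤ) (hj : j ≤ 0) : ff α i (0, j) = gg α i 1 := by
  unfold ff; rw [if_neg (fun h => by omega), if_pos (Or.inl rfl)]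

lemma ff_horiz (α : ℝ) (i k : ℤ) : ff α i (k, 0) = gg α i 1 := by
  unfold ff; rw [if_neg (fun h => by omega), if_pos (Or.inr rfl)]

lemma ff_cone (α : ℝ) (i : ℤ) (z : ℤ × ℤ) (h1 : z.1 ≠ 0) (h2 : z.2 ≠ 0) :
    ff α i z = 0 := by
  unfold ff
  rw [if_neg (fun h => h1 h.1), if_neg (fun h => by tauto)]

lemma sum_le_of_support (s T : Finset (ℤ × ℤ)) (F : ℤ × ℤ → ℝ)
    (h0 : ∀ a ∈ s, a ∉ T → F a = 0) (hnn : ∀ a ∈ T, 0 ≤ F a) :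
    ∑ a ∈ s, F a ≤ ∑ a ∈ T, F a := by
  have h1 : ∑ a ∈ s ∩ T, F a = ∑ a ∈ s, F a := by
    apply Finset.sum_subset Finset.inter_subset_left
    intro x hx hx2
    exact h0 x hx (fun hT => hx2 (Finset.mem_inter.mpr ⟨hx, hT⟩))
  rw [← h1]
  exact Finset.sum_le_sum_of_subset_of_nonneg Finset.inter_subset_right
    (fun a ha _ => hnn a ha)

lemma one_le_rpow_int (α : ℝ) (hα : 0 ≤ α) (m : ℤ) (hm : 1 ≤ m) :
    (1:ℝ) ≤ (m : ℝ) ^ α :=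
  Real.one_le_rpow (by exact_mod_cast hm) hα

lemma superharm (α : ℝ) (hα : 0 ≤ α) (i : ℤ) (hi : 1 < i) (z : ℤ × ℤ)
    (hz : z ∈ axesKc) (hzb : z ≠ (0, i)) (s : Finset (ℤ × ℤ)) :
    ∑ a ∈ s, q α z a * ff α i a ≤ ff α i z := by
  have tnn : ∀ a : ℤ × ℤ, 0 ≤ q α z a * ff α i a := fun a =>
    mul_nonneg (q_nonneg α hα z a) (ff_nonneg α i a)
  obtain ⟨z1, z2⟩ := z
  have hz' : z1 = 0 ∨ z2 = 0 := hz
  by_cases h1 : z1 = 0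
  · subst h1
    rcases lt_trichotomy z2 0 with hneg | hzero | hpos
    · -- negative vertical axis
      have hz2 : z2 ≠ 0 := hneg.ne
      set c := ((z2.natAbs : ℝ)) ^ α with hc
      have hc1 : (1:ℝ) ≤ c := one_le_pow_natAbs α hα z2 hz2
      have hcpos : (0:ℝ) < c := lt_of_lt_of_le one_pos hc1
      have hsgn : Int.sign z2 = -1 := Int.sign_eq_neg_one_of_neg hneg
      have key : ∑ a ∈ s, q α (0, z2) a * ff α i a ≤
          ∑ a ∈ ({(0, z2 - 1), (0, z2 + 1)} : Finset (ℤ × ℤ)),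
            q α (0, z2) a * ff α i a := by
        apply sum_le_of_support _ _ _ _ (fun a _ => tnn a)
        intro a ha haT
        simp only [Finset.mem_insert, Finset.mem_singleton] at haT
        push_neg at haT
        rcases em (q α (0, z2) a = 0) with h | h
        · rw [h, zero_mul]
        · have hd : a = (0, z2 + Int.sign z2) ∨ a = (1, z2) ∨ a = (-1, z2) ∨
              a = (0, z2 - Int.sign z2) := by
            by_contra hc2; exact h (q_vert_supp α z2 hz2 a hc2)
          rw [hsgn] at hd
          rcases hd with h' | h' | h' | h'
          · exact absurd (h'.trans (by simp [Prod.ext_iff]; try ring)) haT.1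
          · rw [h', ff_cone α i _ (by norm_num) hz2, mul_zero]
          · rw [h', ff_cone α i _ (by norm_num) hz2, mul_zero]
          · exact absurd (h'.trans (by simp [Prod.ext_iff]; try ring)) haT.2
      refine key.trans ?_
      rw [Finset.sum_insert (by simp [Prod.ext_iff]; try omega), Finset.sum_singleton]
      have hq1 : q α (0, z2) (0, z2 - 1) = 1 / (4 * c) := by
        rw [q_vert α z2 hz2, if_pos (by left; rw [hsgn]; simp [Prod.ext_iff]; try ring)]
      have hq2 : q α (0, z2) (0, z2 + 1) = 1 - 3 / (4 * c) := by
        rw [q_vert α z2 hz2,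
          if_neg (by rw [hsgn]; simp [Prod.ext_iff]; try omega),
          if_pos (by rw [hsgn]; simp [Prod.ext_iff]; try ring)]
      rw [hq1, hq2, ff_vneg α i (z2 - 1) (by omega), ff_vneg α i (z2 + 1) (by omega),
        ff_vneg α i z2 (by omega)]
      have hg1 : 0 ≤ gg α i 1 := (gg_pos α i 1 le_rfl).le
      have h3 : (1:ℝ) / (4 * c) ≤ 3 / (4 * c) := by
        apply div_le_div_of_nonneg_right ?_ (by positivity)
        · norm_num
      nlinarith [hg1, h3]
    · -- origin
      subst hzero
      have key : ∑ a ∈ s, q α (0, 0) a * ff α i a ≤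
          ∑ a ∈ ({(0, 1), (0, -1), (1, 0), (-1, 0)} : Finset (ℤ × ℤ)),
            q α (0, 0) a * ff α i a := by
        apply sum_le_of_support _ _ _ _ (fun a _ => tnn a)
        intro a ha haT
        simp only [Finset.mem_insert, Finset.mem_singleton] at haT
        push_neg at haT
        rw [q_orig, if_neg, zero_mul]
        obtain ⟨a1, a2⟩ := a
        intro hadj
        simp [adj, Prod.ext_iff] at hadj haT
        omega
      refine key.trans ?_
      rw [Finset.sum_insert (by simp), Finset.sum_insert (by simp),
        Finset.sum_insert (by simp), Finset.sum_singleton]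
      have e1 : q α (0, 0) (0, 1) = 1 / 4 := by rw [q_orig, if_pos (by simp [adj])]
      have e2 : q α (0, 0) (0, -1) = 1 / 4 := by rw [q_orig, if_pos (by simp [adj])]
      have e3 : q α (0, 0) (1, 0) = 1 / 4 := by rw [q_orig, if_pos (by simp [adj])]
      have e4 : q α (0, 0) (-1, 0) = 1 / 4 := by rw [q_orig, if_pos (by simp [adj])]
      rw [e1, e2, e3, e4, ff_vert α i 1 le_rfl, ff_vneg α i (-1) (by omega),
        ff_horiz α i 1, ff_horiz α i (-1), ff_horiz α i 0]
      linarith [gg_pos α i 1 le_rfl]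
    · -- positive vertical axis
      have hz2 : z2 ≠ 0 := hpos.ne'
      have hz2i : z2 ≠ i := fun h => hzb (by rw [h])
      set c := ((z2 : ℝ)) ^ α with hc
      have hcc : ((z2.natAbs : ℝ)) ^ α = c := by rw [natAbs_cast_real z2 hpos.le]
      have hc1 : (1:ℝ) ≤ c := one_le_rpow_int α hα z2 (by omega)
      have hcpos : (0:ℝ) < c := lt_of_lt_of_le one_pos hc1
      have key : ∑ a ∈ s, q α (0, z2) a * ff α i a ≤
          ∑ a ∈ ({(0, z2 + 1), (0, z2 - 1)} : Finset (ℤ × ℤ)),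
            q α (0, z2) a * ff α i a := by
        apply sum_le_of_support _ _ _ _ (fun a _ => tnn a)
        intro a ha haT
        simp only [Finset.mem_insert, Finset.mem_singleton] at haT
        push_neg at haT
        rcases em (q α (0, z2) a = 0) with h | h
        · rw [h, zero_mul]
        · have hd : a = (0, z2 + Int.sign z2) ∨ a = (1, z2) ∨ a = (-1, z2) ∨
              a = (0, z2 - Int.sign z2) := by
            by_contra hc2; exact h (q_vert_supp α z2 hz2 a hc2)
          rw [Int.sign_eq_one_of_pos hpos] at hd
          rcases hd with h' | h' | h' | h'
          · exact absurd h' haT.1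
          · rw [h', ff_cone α i _ (by norm_num) hz2, mul_zero]
          · rw [h', ff_cone α i _ (by norm_num) hz2, mul_zero]
          · exact absurd h' haT.2
      refine key.trans ?_
      rw [Finset.sum_insert (by simp [Prod.ext_iff]; try omega), Finset.sum_singleton]
      have hq1 : q α (0, z2) (0, z2 + 1) = 1 / (4 * c) := by
        rw [q_vert_up α z2 hpos]
      have hq2 : q α (0, z2) (0, z2 - 1) = 1 - 3 / (4 * c) := by
        rw [q_vert_down α z2 hpos]
      rw [hq1, hq2, ff_vert α i (z2 + 1) (by omega), ff_vert α i z2 (by omega)]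
      have hd0 : (0:ℝ) ≤ 1 - 3 / (4 * c) := by
        have h2 : (3:ℝ) / (4 * c) ≤ 3 / 4 :=
          div_le_div_of_nonneg_left (by norm_num) (by norm_num) (by linarith)
        linarith
      have hd1 : 1 - 3 / (4 * c) ≤ 1 := by
        have : (0:ℝ) ≤ 3 / (4 * c) := by positivity
        linarith
      rcases lt_or_gt_of_ne hz2i with hlt | hgt
      · -- z2 < i
        have hrec : gg α i z2 = (1 / (2 * c)) * gg α i (z2 + 1) := gg_succ α i z2 hlt
        have hgpos : 0 < gg α i (z2 + 1) := gg_pos _ _ _ (by omega)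
        have hterm1 : 1 / (4 * c) * gg α i (z2 + 1) = (1/2) * gg α i z2 := by
          rw [hrec]; field_simp
          ring
        rcases eq_or_lt_of_le (show (1:ℤ) ≤ z2 by omega) with h12 | h22
        · -- z2 = 1
          have hz21 : z2 = 1 := h12.symm
          have hc1' : c = 1 := by
            rw [hc, hz21]; norm_num
          have hffd : ff α i (0, z2 - 1) = gg α i 1 := by
            rw [hz21]; exact ff_vneg α i 0 le_rfl
          rw [hffd, hterm1, hc1', hz21]
          nlinarith [gg_pos α i 1 le_rfl]
        · -- 2 ≤ z2
          have hffd : ff α i (0, z2 - 1) = gg α i (z2 - 1) := ff_vert _ _ _ (by omega)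
          have hrec2 : gg α i (z2 - 1) = (1 / (2 * ((z2 - 1 : ℤ) : ℝ) ^ α)) * gg α i z2 := by
            have h := gg_succ α i (z2 - 1) (by omega)
            rw [show z2 - 1 + 1 = z2 by ring] at h
            exact h
          have h1c : (1:ℝ) ≤ ((z2 - 1 : ℤ) : ℝ) ^ α := one_le_rpow_int α hα (z2 - 1) (by omega)
          have hgz2 : 0 ≤ gg α i z2 := (gg_pos _ _ _ (by omega)).le
          have hgz2' : 0 ≤ gg α i (z2 - 1) := (gg_pos _ _ _ (by omega)).le
          have hhalf : gg α i (z2 - 1) ≤ (1/2) * gg α i z2 := by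
            rw [hrec2]
            apply mul_le_mul_of_nonneg_right ?_ hgz2
            rw [div_le_div_iff₀ (by positivity) (by norm_num)]
            linarith
          rw [hffd, hterm1]
          nlinarith [mul_le_mul_of_nonneg_right hd1 hgz2']
      · -- i < z2
        have hffd : ff α i (0, z2 - 1) = gg α i (z2 - 1) := ff_vert _ _ _ (by omega)
        rw [hffd, gg_stop α i (z2 + 1) (by omega), gg_stop α i z2 (by omega),
          gg_stop α i (z2 - 1) (by omega)]
        have h3 : (1:ℝ) / (4 * c) ≤ 3 / (4 * c) := by
          apply div_le_div_of_nonneg_right (by norm_num) (by positivity)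
        linarith
  · -- horizontal axis, z1 ≠ 0
    have hz2 : z2 = 0 := by tauto
    subst hz2
    set c := ((z1.natAbs : ℝ)) ^ α with hc
    have hc1 : (1:ℝ) ≤ c := one_le_pow_natAbs α hα z1 h1
    have hcpos : (0:ℝ) < c := lt_of_lt_of_le one_pos hc1
    have hsgn : Int.sign z1 = 1 ∨ Int.sign z1 = -1 := by
      rcases lt_trichotomy z1 0 with h | h | h
      · right; exact Int.sign_eq_neg_one_of_neg h
      · exact absurd h h1
      · left; exact Int.sign_eq_one_of_pos h
    have hsne : Int.sign z1 ≠ 0 := by rcases hsgn with h | h <;> rw [h] <;> norm_num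
    have key : ∑ a ∈ s, q α (z1, 0) a * ff α i a ≤
        ∑ a ∈ ({(z1 + Int.sign z1, 0), (z1 - Int.sign z1, 0)} : Finset (ℤ × ℤ)),
          q α (z1, 0) a * ff α i a := by
      apply sum_le_of_support _ _ _ _ (fun a _ => tnn a)
      intro a ha haT
      simp only [Finset.mem_insert, Finset.mem_singleton] at haT
      push_neg at haT
      rcases em (q α (z1, 0) a = 0) with h | h
      · rw [h, zero_mul]
      · have hd : a = (z1 + Int.sign z1, 0) ∨ a = (z1, 1) ∨ a = (z1, -1) ∨
            a = (z1 - Int.sign z1, 0) := by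
          by_contra hc2
          push_neg at hc2
          apply h
          rw [q_horiz α z1 h1, if_neg (by tauto), if_neg (by tauto)]
        rcases hd with h' | h' | h' | h'
        · exact absurd h' haT.1
        · rw [h', ff_cone α i _ h1 (by norm_num), mul_zero]
        · rw [h', ff_cone α i _ h1 (by norm_num), mul_zero]
        · exact absurd h' haT.2
    refine key.trans ?_
    rw [Finset.sum_insert (by simp [Prod.ext_iff]; try omega), Finset.sum_singleton]
    have hq1 : q α (z1, 0) (z1 + Int.sign z1, 0) = 1 / (4 * c) := by
      rw [q_horiz α z1 h1, if_pos (by left; rfl)]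
    have hq2 : q α (z1, 0) (z1 - Int.sign z1, 0) = 1 - 3 / (4 * c) := by
      rw [q_horiz α z1 h1, if_neg (by simp [Prod.ext_iff]; try omega), if_pos rfl]
    rw [hq1, hq2, ff_horiz α i _, ff_horiz α i _, ff_horiz α i _]
    have hg1 : 0 ≤ gg α i 1 := (gg_pos α i 1 le_rfl).le
    have h3 : (1:ℝ) / (4 * c) ≤ 3 / (4 * c) := by
      apply div_le_div_of_nonneg_right (by norm_num) (by positivity)
    nlinarith [hg1, h3]

/-! ### paths and weights -/

def endv (z : ℤ × ℤ) (l : List (ℤ × ℤ)) : ℤ × ℤ := l.getLastD z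

lemma endv_nil (z : ℤ × ℤ) : endv z [] = z := rfl

lemma endv_cons (z a : ℤ × ℤ) (l : List (ℤ × ℤ)) : endv z (a :: l) = endv a l :=
  List.getLastD_cons

lemma endv_concat (z a : ℤ × ℤ) (l : List (ℤ × ℤ)) : endv z (l ++ [a]) = a :=
  List.getLastD_concat

lemma endv_mem (z : ℤ × ℤ) (l : List (ℤ × ℤ)) (h : l ≠ []) : endv z l ∈ l := by
  cases l with
  | nil => exact absurd rfl h
  | cons a t =>
    rw [endv_cons]
    exact List.getLastD_mem_cons

lemma endv_append (z : ℤ × ℤ) (l1 l2 : List (ℤ × ℤ)) :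
    endv z (l1 ++ l2) = endv (endv z l1) l2 := by
  induction l1 generalizing z with
  | nil => rw [List.nil_append, endv_nil]
  | cons a t ih => rw [List.cons_append, endv_cons, endv_cons, ih]

noncomputable def wt (α : ℝ) : ℤ × ℤ → List (ℤ × ℤ) → ℝ
  | _, [] => 1
  | z, a :: l => q α z a * wt α a l

lemma wt_nil (α : ℝ) (z : ℤ × ℤ) : wt α z [] = 1 := rfl

lemma wt_cons (α : ℝ) (z a : ℤ × ℤ) (l : List (ℤ × ℤ)) :
    wt α z (a :: l) = q α z a * wt α a l := rfl

lemma wt_nonneg (α : ℝ) (hα : 0 ≤ α) (z : ℤ × ℤ) (l : List (ℤ × ℤ)) : 0 ≤ wt α z l := by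
  induction l generalizing z with
  | nil => rw [wt_nil]; norm_num
  | cons a t ih => rw [wt_cons]; exact mul_nonneg (q_nonneg α hα z a) (ih a)

lemma wt_append (α : ℝ) (z : ℤ × ℤ) (l1 l2 : List (ℤ × ℤ)) :
    wt α z (l1 ++ l2) = wt α z l1 * wt α (endv z l1) l2 := by
  induction l1 generalizing z with
  | nil => rw [List.nil_append, endv_nil, wt_nil, one_mul]
  | cons a t ih =>
    rw [List.cons_append, wt_cons, wt_cons, endv_cons, ih, mul_assoc]

lemma mem_dropLast_cons (a x : ℤ × ℤ) (t : List (ℤ × ℤ)) (h : x ∈ t.dropLast) :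
    x ∈ (a :: t).dropLast := by
  cases t with
  | nil => simp at h
  | cons c u => rw [List.dropLast_cons₂]; exact List.mem_cons_of_mem _ h

lemma self_mem_dropLast_cons (a : ℤ × ℤ) (t : List (ℤ × ℤ)) (h : t ≠ []) :
    a ∈ (a :: t).dropLast := by
  cases t with
  | nil => exact absurd rfl h
  | cons c u => rw [List.dropLast_cons₂]; exact List.mem_cons_self

/-- a path from `z` which stays on the axes and ends at `(0,i)` at its first visit -/
def FirstPass (i : ℤ) (z : ℤ × ℤ) (l : List (ℤ × ℤ)) : Prop :=
  endv z l = (0, i) ∧ (∀ v ∈ l, v ∈ axesKc) ∧ (0, i) ∉ l.dropLast ∧ (z = (0, i) → l = [])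

lemma fp_tail (i : ℤ) (z a : ℤ × ℤ) (t : List (ℤ × ℤ)) (h : FirstPass i z (a :: t)) :
    FirstPass i a t := by
  obtain ⟨e1, e2, e3, _⟩ := h
  refine ⟨?_, ?_, ?_, ?_⟩
  · rw [← endv_cons z a t]; exact e1
  · exact fun v hv => e2 v (List.mem_cons_of_mem _ hv)
  · exact fun hmem => e3 (mem_dropLast_cons a _ t hmem)
  · intro hab
    by_contra hne
    exact e3 (hab ▸ self_mem_dropLast_cons a t hne)

lemma ffb_eq_one (α : ℝ) (i : ℤ) (hi : 1 < i) : ff α i (0, i) = 1 := by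
  rw [ff_vert α i i (by omega), gg_stop α i i le_rfl]

lemma fp_sum_le (α : ℝ) (hα : 0 ≤ α) (i : ℤ) (hi : 1 < i) :
    ∀ N : ℕ, ∀ z : ℤ × ℤ, z ∈ axesKc → ∀ F : Finset (List (ℤ × ℤ)),
      (∀ l ∈ F, FirstPass i z l ∧ l.length ≤ N) →
      ∑ l ∈ F, wt α z l ≤ ff α i z := by
  have hsingle : ∀ F : Finset (List (ℤ × ℤ)),
      (∀ l ∈ F, FirstPass i (0, i) l) → ∑ l ∈ F, wt α (0, i) l ≤ ff α i (0, i) := by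
    intro F hF
    have hsub : F ⊆ {[]} := by
      intro l hl
      have h4 := (hF l hl).2.2.2 rfl
      simp [h4]
    rw [ffb_eq_one α i hi]
    rcases Finset.subset_singleton_iff.mp hsub with h | h <;> rw [h] <;> simp [wt_nil]
  intro N
  induction N with
  | zero =>
    intro z hz F hF
    by_cases hzb : z = (0, i)
    · subst hzb; exact hsingle F (fun l hl => (hF l hl).1)
    · have hF0 : F = ∅ := by
        apply Finset.eq_empty_iff_forall_notMem.mpr
        intro l hl
        have hlen : l = [] := List.length_eq_zero_iff.mp (Nat.le_zero.mp (hF l hl).2)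
        subst hlen
        exact hzb (hF [] hl).1.1
      rw [hF0, Finset.sum_empty]
      exact ff_nonneg α i z
  | succ n ih =>
    intro z hz F hF
    by_cases hzb : z = (0, i)
    · subst hzb; exact hsingle F (fun l hl => (hF l hl).1)
    · have hne : ∀ l ∈ F, l ≠ [] := by
        intro l hl hnil
        rw [hnil] at hl
        exact hzb ((hF [] hl).1.1)
      have hmaps : ∀ l ∈ F, l.headD (0, i) ∈ F.image (fun l => l.headD (0, i)) :=
        fun l hl => Finset.mem_image_of_mem _ hl
      rw [← Finset.sum_fiberwise_of_maps_to hmaps (wt α z)]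
      have hstep : ∀ a ∈ F.image (fun l => l.headD (0, i)),
          ∑ l ∈ F.filter (fun l => l.headD (0, i) = a), wt α z l ≤ q α z a * ff α i a := by
        intro a ha
        obtain ⟨l₀, hl₀F, hl₀⟩ := Finset.mem_image.mp ha
        obtain ⟨a₀, t₀, rfl⟩ := List.exists_cons_of_ne_nil (hne l₀ hl₀F)
        have ha₀ : a₀ = a := hl₀
        have haax : a ∈ axesKc := by
          rw [← ha₀]
          exact (hF _ hl₀F).1.2.1 a₀ (List.mem_cons_self)
        have hrw : ∀ l ∈ F.filter (fun l => l.headD (0, i) = a),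
            wt α z l = q α z a * wt α a l.tail := by
          intro l hl
          rw [Finset.mem_filter] at hl
          obtain ⟨b₁, t₁, rfl⟩ := List.exists_cons_of_ne_nil (hne l hl.1)
          have hb₁ : b₁ = a := hl.2
          subst hb₁
          rfl
        rw [Finset.sum_congr rfl hrw, ← Finset.mul_sum]
        apply mul_le_mul_of_nonneg_left ?_ (q_nonneg α hα z a)
        have hinj : ∀ x ∈ F.filter (fun l => l.headD (0, i) = a),
            ∀ y ∈ F.filter (fun l => l.headD (0, i) = a), x.tail = y.tail → x = y := by
          intro x hx y hy hxy
          rw [Finset.mem_filter] at hx hy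
          obtain ⟨bx, tx, rfl⟩ := List.exists_cons_of_ne_nil (hne x hx.1)
          obtain ⟨bz, tz, rfl⟩ := List.exists_cons_of_ne_nil (hne y hy.1)
          have h1 : bx = a := hx.2
          have h2 : bz = a := hy.2
          simp only [List.tail_cons] at hxy
          rw [h1, h2, hxy]
        rw [← Finset.sum_image hinj]
        apply ih a haax
        intro t ht
        obtain ⟨l, hlF, hlt⟩ := Finset.mem_image.mp ht
        rw [Finset.mem_filter] at hlF
        obtain ⟨bl, tl', rfl⟩ := List.exists_cons_of_ne_nil (hne l hlF.1)
        have hba : bl = a := hlF.2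
        subst hba
        simp only [List.tail_cons] at hlt
        subst hlt
        obtain ⟨hfp, hlen⟩ := hF _ hlF.1
        refine ⟨fp_tail i z _ _ hfp, ?_⟩
        simp only [List.length_cons] at hlen
        omega
      calc ∑ a ∈ F.image (fun l => l.headD (0, i)),
            ∑ l ∈ F.filter (fun l => l.headD (0, i) = a), wt α z l
          ≤ ∑ a ∈ F.image (fun l => l.headD (0, i)), q α z a * ff α i a :=
            Finset.sum_le_sum hstep
        _ ≤ ff α i z := superharm α hα i hi z hz hzb _

lemma fp_sum_le' (α : ℝ) (hα : 0 ≤ α) (i : ℤ) (hi : 1 < i) (z : ℤ × ℤ) (hz : z ∈ axesKc)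
    (F : Finset (List (ℤ × ℤ))) (h : ∀ l ∈ F, FirstPass i z l) :
    ∑ l ∈ F, wt α z l ≤ ff α i z :=
  fp_sum_le α hα i hi (F.sup List.length) z hz F
    (fun l hl => ⟨h l hl, Finset.le_sup hl⟩)

lemma head_bound (α : ℝ) (hα : 0 ≤ α) (i : ℤ) (hi : 1 < i) (s : Finset (ℤ × ℤ)) :
    ∑ a ∈ s, q α (0, i) a * ff α i a ≤ 1 / (4 * (i : ℝ) ^ α) + gg α i (i - 1) := by
  have hi0 : (0:ℤ) < i := by omega
  have hiz : i ≠ 0 := by omega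
  have hc1 : (1:ℝ) ≤ (i : ℝ) ^ α := one_le_rpow_int α hα i (by omega)
  have hcpos : (0:ℝ) < (i : ℝ) ^ α := lt_of_lt_of_le one_pos hc1
  have tnn : ∀ a : ℤ × ℤ, 0 ≤ q α (0, i) a * ff α i a := fun a =>
    mul_nonneg (q_nonneg α hα (0, i) a) (ff_nonneg α i a)
  have key : ∑ a ∈ s, q α (0, i) a * ff α i a ≤
      ∑ a ∈ ({(0, i + 1), (0, i - 1)} : Finset (ℤ × ℤ)), q α (0, i) a * ff α i a := by
    apply sum_le_of_support _ _ _ _ (fun a _ => tnn a)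
    intro a ha haT
    simp only [Finset.mem_insert, Finset.mem_singleton] at haT
    push_neg at haT
    rcases em (q α (0, i) a = 0) with h | h
    · rw [h, zero_mul]
    · have hd : a = (0, i + Int.sign i) ∨ a = (1, i) ∨ a = (-1, i) ∨
          a = (0, i - Int.sign i) := by
        by_contra hc2; exact h (q_vert_supp α i hiz a hc2)
      rw [Int.sign_eq_one_of_pos hi0] at hd
      rcases hd with h' | h' | h' | h'
      · exact absurd h' haT.1
      · rw [h', ff_cone α i _ (by norm_num) hiz, mul_zero]
      · rw [h', ff_cone α i _ (by norm_num) hiz, mul_zero]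
      · exact absurd h' haT.2
  refine key.trans ?_
  rw [Finset.sum_insert (by simp [Prod.ext_iff]; try omega), Finset.sum_singleton,
    q_vert_up α i hi0, q_vert_down α i hi0, ff_vert α i (i + 1) (by omega),
    ff_vert α i (i - 1) (by omega), gg_stop α i (i + 1) (by omega)]
  have hg : 0 ≤ gg α i (i - 1) := (gg_pos α i (i - 1) (by omega)).le
  have hd1 : 1 - 3 / (4 * (i : ℝ) ^ α) ≤ 1 := by
    have : (0:ℝ) ≤ 3 / (4 * (i : ℝ) ^ α) := by positivity
    linarith
  nlinarith [mul_le_mul_of_nonneg_right hd1 hg]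

/-- loops on the axes based at `(0,i)` -/
def IsLoop (i : ℤ) (l : List (ℤ × ℤ)) : Prop :=
  endv (0, i) l = (0, i) ∧ ∀ v ∈ l, v ∈ axesKc

/-- first-return excursions -/
def IsExc (i : ℤ) (l : List (ℤ × ℤ)) : Prop :=
  IsLoop i l ∧ l ≠ [] ∧ (0, i) ∉ l.dropLast

lemma exc_sum_le (α : ℝ) (hα : 0 ≤ α) (i : ℤ) (hi : 1 < i) (F : Finset (List (ℤ × ℤ)))
    (hF : ∀ l ∈ F, IsExc i l) :
    ∑ l ∈ F, wt α (0, i) l ≤ 1 / (4 * (i : ℝ) ^ α) + gg α i (i - 1) := by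
  have hne : ∀ l ∈ F, l ≠ [] := fun l hl => (hF l hl).2.1
  have hmaps : ∀ l ∈ F, l.headD (0, i) ∈ F.image (fun l => l.headD (0, i)) :=
    fun l hl => Finset.mem_image_of_mem _ hl
  rw [← Finset.sum_fiberwise_of_maps_to hmaps (wt α (0, i))]
  have hstep : ∀ a ∈ F.image (fun l => l.headD (0, i)),
      ∑ l ∈ F.filter (fun l => l.headD (0, i) = a), wt α (0, i) l
        ≤ q α (0, i) a * ff α i a := by
    intro a ha
    obtain ⟨l₀, hl₀F, hl₀⟩ := Finset.mem_image.mp ha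
    obtain ⟨a₀, t₀, rfl⟩ := List.exists_cons_of_ne_nil (hne l₀ hl₀F)
    have ha₀ : a₀ = a := hl₀
    have haax : a ∈ axesKc := by
      rw [← ha₀]; exact (hF _ hl₀F).1.2 a₀ (List.mem_cons_self)
    have hrw : ∀ l ∈ F.filter (fun l => l.headD (0, i) = a),
        wt α (0, i) l = q α (0, i) a * wt α a l.tail := by
      intro l hl
      rw [Finset.mem_filter] at hl
      obtain ⟨b₁, t₁, rfl⟩ := List.exists_cons_of_ne_nil (hne l hl.1)
      have hb₁ : b₁ = a := hl.2
      subst hb₁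
      rfl
    rw [Finset.sum_congr rfl hrw, ← Finset.mul_sum]
    apply mul_le_mul_of_nonneg_left ?_ (q_nonneg α hα (0, i) a)
    have hinj : ∀ x ∈ F.filter (fun l => l.headD (0, i) = a),
        ∀ y ∈ F.filter (fun l => l.headD (0, i) = a), x.tail = y.tail → x = y := by
      intro x hx y hy hxy
      rw [Finset.mem_filter] at hx hy
      obtain ⟨bx, tx, rfl⟩ := List.exists_cons_of_ne_nil (hne x hx.1)
      obtain ⟨bz, tz, rfl⟩ := List.exists_cons_of_ne_nil (hne y hy.1)
      have h1 : bx = a := hx.2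
      have h2 : bz = a := hy.2
      simp only [List.tail_cons] at hxy
      rw [h1, h2, hxy]
    rw [← Finset.sum_image hinj]
    apply fp_sum_le' α hα i hi a haax
    intro t ht
    obtain ⟨l, hlF, hlt⟩ := Finset.mem_image.mp ht
    rw [Finset.mem_filter] at hlF
    obtain ⟨bl, tl', rfl⟩ := List.exists_cons_of_ne_nil (hne l hlF.1)
    have hba : bl = a := hlF.2
    subst hba
    simp only [List.tail_cons] at hlt
    subst hlt
    obtain ⟨⟨e1, e2⟩, _, e3⟩ := hF _ hlF.1
    refine ⟨?_, ?_, ?_, ?_⟩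
    · rw [← endv_cons (0, i) _ _]; exact e1
    · exact fun v hv => e2 v (List.mem_cons_of_mem _ hv)
    · exact fun hmem => e3 (mem_dropLast_cons _ _ _ hmem)
    · intro hab
      by_contra hne2
      exact e3 (hab ▸ self_mem_dropLast_cons _ _ hne2)
  calc ∑ a ∈ F.image (fun l => l.headD (0, i)),
        ∑ l ∈ F.filter (fun l => l.headD (0, i) = a), wt α (0, i) l
      ≤ ∑ a ∈ F.image (fun l => l.headD (0, i)), q α (0, i) a * ff α i a :=
        Finset.sum_le_sum hstep
    _ ≤ 1 / (4 * (i : ℝ) ^ α) + gg α i (i - 1) := head_bound α hα i hi _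

lemma H_le_58 (α : ℝ) (hα1 : 1 ≤ α) (i : ℤ) (hi : 1 < i) :
    1 / (4 * (i : ℝ) ^ α) + gg α i (i - 1) ≤ 5 / 8 := by
  have hα : (0:ℝ) ≤ α := by linarith
  have hi2 : (2:ℝ) ≤ (i : ℝ) := by exact_mod_cast hi
  have h1 : (2:ℝ) ≤ (i : ℝ) ^ α := by
    calc (2:ℝ) ≤ (i : ℝ) := hi2
    _ = (i : ℝ) ^ (1:ℝ) := (Real.rpow_one _).symm
    _ ≤ (i : ℝ) ^ α := Real.rpow_le_rpow_of_exponent_le (by linarith) hα1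
  have hterm1 : 1 / (4 * (i : ℝ) ^ α) ≤ 1 / 8 := by
    apply div_le_div_of_nonneg_left (by norm_num) (by norm_num) (by linarith)
  have hggval : gg α i (i - 1) = 1 / (2 * ((i - 1 : ℤ) : ℝ) ^ α) := by
    have h := gg_succ α i (i - 1) (by omega)
    rw [show (i:ℤ) - 1 + 1 = i by ring, gg_stop α i i le_rfl, mul_one] at h
    exact h
  have h1c : (1:ℝ) ≤ ((i - 1 : ℤ) : ℝ) ^ α := one_le_rpow_int α hα (i - 1) (by omega)
  have hterm2 : gg α i (i - 1) ≤ 1 / 2 := by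
    rw [hggval]
    apply div_le_div_of_nonneg_left (by norm_num) (by norm_num) (by linarith)
  linarith

lemma H_pos (α : ℝ) (hα : 0 ≤ α) (i : ℤ) (hi : 1 < i) :
    0 < 1 / (4 * (i : ℝ) ^ α) + gg α i (i - 1) := by
  have hc : (1:ℝ) ≤ (i : ℝ) ^ α := one_le_rpow_int α hα i (by omega)
  have : (0:ℝ) < 1 / (4 * (i : ℝ) ^ α) := by positivity
  linarith [(gg_pos α i (i - 1) (by omega)).le]

def pe (i : ℤ) : ℤ × ℤ → Bool := fun v => decide (v ≠ (0, i))

lemma pe_true_iff (i : ℤ) (v : ℤ × ℤ) : pe i v = true ↔ v ≠ (0, i) := by simp [pe]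

lemma pe_false_iff (i : ℤ) (v : ℤ × ℤ) : pe i v = false ↔ v = (0, i) := by simp [pe]

def exO (i : ℤ) (l : List (ℤ × ℤ)) : List (ℤ × ℤ) := l.takeWhile (pe i) ++ [(0, i)]

def reO (i : ℤ) (l : List (ℤ × ℤ)) : List (ℤ × ℤ) := (l.dropWhile (pe i)).tail

lemma endv_exO (z : ℤ × ℤ) (i : ℤ) (l : List (ℤ × ℤ)) : endv z (exO i l) = (0, i) :=
  endv_concat z _ _

lemma loop_sum_le (α : ℝ) (hα1 : 1 < α) (i : ℤ) (hi : 1 < i) :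
    ∀ N : ℕ, ∀ F : Finset (List (ℤ × ℤ)),
      (∀ l ∈ F, IsLoop i l ∧ l.length ≤ N) →
      ∑ l ∈ F, wt α (0, i) l ≤ (1 - (1 / (4 * (i : ℝ) ^ α) + gg α i (i - 1)))⁻¹ := by
  have hα : (0:ℝ) ≤ α := by linarith
  obtain ⟨H, hH⟩ : ∃ H : ℝ, H = 1 / (4 * (i : ℝ) ^ α) + gg α i (i - 1) := ⟨_, rfl⟩
  rw [show (1 - (1 / (4 * (i : ℝ) ^ α) + gg α i (i - 1)))⁻¹ = (1 - H)⁻¹ by rw [hH]]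
  have hH58 : H ≤ 5 / 8 := by rw [hH]; exact H_le_58 α hα1.le i hi
  have hHpos : 0 < H := by rw [hH]; exact H_pos α hα i hi
  have h1H : (0:ℝ) < 1 - H := by linarith
  have hM1 : (1:ℝ) ≤ (1 - H)⁻¹ := by
    rw [← one_div, le_div_iff₀ h1H]
    linarith
  have hMform : 1 + H * (1 - H)⁻¹ = (1 - H)⁻¹ := by
    field_simp
    ring
  intro N
  induction N with
  | zero =>
    intro F hF
    have hsub : F ⊆ {[]} := by
      intro l hl
      simp [List.length_eq_zero_iff.mp (Nat.le_zero.mp (hF l hl).2)]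
    rcases Finset.subset_singleton_iff.mp hsub with h | h <;> rw [h]
    · rw [Finset.sum_empty]; linarith
    · rw [Finset.sum_singleton, wt_nil]; exact hM1
  | succ n ih =>
    intro F hF
    rw [← Finset.sum_filter_add_sum_filter_not F (fun l => l = []) (wt α (0, i))]
    have hA : ∑ l ∈ F.filter (fun l => l = []), wt α (0, i) l ≤ 1 := by
      have hsub : F.filter (fun l => l = []) ⊆ {[]} := by
        intro l hl
        simp [(Finset.mem_filter.mp hl).2]
      rcases Finset.subset_singleton_iff.mp hsub with h | h <;> rw [h]
      · rw [Finset.sum_empty]; norm_num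
      · rw [Finset.sum_singleton, wt_nil]
    set F1 := F.filter (fun l => ¬l = []) with hF1
    have hne : ∀ l ∈ F1, l ≠ [] := fun l hl => (Finset.mem_filter.mp hl).2
    have hloop : ∀ l ∈ F1, IsLoop i l ∧ l.length ≤ n + 1 :=
      fun l hl => hF l (Finset.mem_filter.mp hl).1
    have hdwne : ∀ l ∈ F1, l.dropWhile (pe i) ≠ [] := by
      intro l hl h
      have hbl : (0, i) ∈ l := (hloop l hl).1.1 ▸ endv_mem (0, i) l (hne l hl)
      have h2 := List.dropWhile_eq_nil_iff.mp h (0, i) hbl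
      rw [pe_true_iff] at h2
      exact h2 rfl
    have hsplit : ∀ l ∈ F1, l = exO i l ++ reO i l := by
      intro l hl
      have hhead : (l.dropWhile (pe i)).head (hdwne l hl) = (0, i) := by
        rw [← pe_false_iff i]
        exact List.head_dropWhile_not (pe i) (hdwne l hl)
      have h3 : exO i l ++ reO i l
          = l.takeWhile (pe i) ++ ((0, i) :: (l.dropWhile (pe i)).tail) := by
        rw [exO, reO, List.append_assoc, List.singleton_append]
      rw [h3, ← hhead, List.cons_head_tail, List.takeWhile_append_dropWhile]
    have hexc : ∀ l ∈ F1, IsExc i (exO i l) := by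
      intro l hl
      refine ⟨⟨endv_concat _ _ _, ?_⟩, by simp [exO], ?_⟩
      · intro v hv
        rcases List.mem_append.mp hv with h | h
        · exact (hloop l hl).1.2 v ((List.takeWhile_sublist (pe i)).mem h)
        · rw [List.mem_singleton.mp h]; exact Or.inl rfl
      · rw [exO, List.dropLast_concat]
        intro hmem
        have h4 := List.mem_takeWhile_imp hmem
        rw [pe_true_iff] at h4
        exact h4 rfl
    have hrem : ∀ l ∈ F1, IsLoop i (reO i l) ∧ (reO i l).length ≤ n := by
      intro l hl
      have he : endv (0, i) (reO i l) = (0, i) := by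
        have h1 := (hloop l hl).1.1
        rw [hsplit l hl, endv_append, endv_exO] at h1
        exact h1
      have hlen : (reO i l).length ≤ n := by
        have h1 : l.length = (exO i l).length + (reO i l).length := by
          conv_lhs => rw [hsplit l hl]
          rw [List.length_append]
        have h2 : 1 ≤ (exO i l).length := by rw [exO]; simp
        have h3 := (hloop l hl).2
        omega
      refine ⟨⟨he, ?_⟩, hlen⟩
      intro v hv
      exact (hloop l hl).1.2 v
        ((List.dropWhile_sublist (pe i)).mem (List.mem_of_mem_tail hv))
    have hsum1 : ∑ l ∈ F1, wt α (0, i) l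
        = ∑ l ∈ F1, wt α (0, i) (exO i l) * wt α (0, i) (reO i l) := by
      apply Finset.sum_congr rfl
      intro l hl
      conv_lhs => rw [hsplit l hl]
      rw [wt_append, endv_exO]
    have hinj : ∀ x ∈ F1, ∀ y ∈ F1,
        (fun l => (exO i l, reO i l)) x = (fun l => (exO i l, reO i l)) y → x = y := by
      intro x hx y hy hxy
      simp only [Prod.mk.injEq] at hxy
      rw [hsplit x hx, hsplit y hy, hxy.1, hxy.2]
    have hB : ∑ l ∈ F1, wt α (0, i) l ≤ H * (1 - H)⁻¹ := by
      rw [hsum1, ← Finset.sum_image (f := fun p : List (ℤ × ℤ) × List (ℤ × ℤ) =>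
        wt α (0, i) p.1 * wt α (0, i) p.2) hinj]
      have hsubp : F1.image (fun l => (exO i l, reO i l))
          ⊆ (F1.image (exO i)) ×ˢ (F1.image (reO i)) := by
        intro p hp
        obtain ⟨l, hl, rfl⟩ := Finset.mem_image.mp hp
        exact Finset.mem_product.mpr
          ⟨Finset.mem_image_of_mem _ hl, Finset.mem_image_of_mem _ hl⟩
      calc ∑ p ∈ F1.image (fun l => (exO i l, reO i l)), wt α (0, i) p.1 * wt α (0, i) p.2
          ≤ ∑ p ∈ (F1.image (exO i)) ×ˢ (F1.image (reO i)),
              wt α (0, i) p.1 * wt α (0, i) p.2 :=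
            Finset.sum_le_sum_of_subset_of_nonneg hsubp
              (fun p _ _ => mul_nonneg (wt_nonneg α hα _ _) (wt_nonneg α hα _ _))
        _ = (∑ x ∈ F1.image (exO i), wt α (0, i) x)
              * (∑ y ∈ F1.image (reO i), wt α (0, i) y) := by
            rw [Finset.sum_mul_sum, Finset.sum_product]
        _ ≤ H * (1 - H)⁻¹ := by
            apply mul_le_mul
            · rw [hH]
              apply exc_sum_le α hα i hi
              intro l hl
              obtain ⟨l2, hl2, rfl⟩ := Finset.mem_image.mp hl
              exact hexc l2 hl2
            · apply ih
              intro l hl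
              obtain ⟨l2, hl2, rfl⟩ := Finset.mem_image.mp hl
              exact hrem l2 hl2
            · exact Finset.sum_nonneg (fun l _ => wt_nonneg α hα _ _)
            · exact hHpos.le
    linarith [hA, hB, hMform]


lemma prod_getD (α : ℝ) (z : ℤ × ℤ) (l : List (ℤ × ℤ)) :
    ∏ m ∈ Finset.range l.length,
      q α ((z :: l).getD m (0, 0)) ((z :: l).getD (m + 1) (0, 0)) = wt α z l := by
  induction l generalizing z with
  | nil => simp [wt_nil]
  | cons a t ih =>
    rw [List.length_cons, Finset.prod_range_succ']
    have hsh : ∀ m : ℕ, (z :: a :: t).getD (m + 1) (0, 0) = (a :: t).getD m (0, 0) :=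
      fun m => List.getD_cons_succ
    calc (∏ m ∈ Finset.range t.length,
          q α ((z :: a :: t).getD (m + 1) (0, 0)) ((z :: a :: t).getD (m + 1 + 1) (0, 0)))
          * q α ((z :: a :: t).getD 0 (0, 0)) ((z :: a :: t).getD (0 + 1) (0, 0))
        = (∏ m ∈ Finset.range t.length,
            q α ((a :: t).getD m (0, 0)) ((a :: t).getD (m + 1) (0, 0))) * q α z a := rfl
      _ = wt α a t * q α z a := by rw [ih a]
      _ = wt α z (a :: t) := by rw [wt_cons]; ring
  
lemma cyl_meas {Ω : Type*} [MeasurableSpace Ω] (α : ℝ) (W : PerturbedWalk α Ω)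
    (z : ℤ × ℤ) (l : List (ℤ × ℤ)) :
    (W.P z {ω | ∀ m ≤ l.length, W.X m ω = (z :: l).getD m (0, 0)}).toReal = wt α z l :=
  (W.fdd z l.length (fun m => (z :: l).getD m (0, 0)) rfl).trans (prod_getD α z l)

lemma cyl_mble {Ω : Type*} [MeasurableSpace Ω] (α : ℝ) (W : PerturbedWalk α Ω)
    (n : ℕ) (p : ℕ → ℤ × ℤ) :
    MeasurableSet {ω | ∀ m ≤ n, W.X m ω = p m} := by
  have h : {ω | ∀ m ≤ n, W.X m ω = p m} = ⋂ m, ⋂ (_ : m ≤ n), (W.X m) ⁻¹' {p m} := by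
    ext ω
    simp [Set.mem_iInter, Set.mem_preimage]
  rw [h]
  exact MeasurableSet.iInter fun m => MeasurableSet.iInter fun _ =>
    (W.meas m) (measurableSet_singleton _)

lemma lower_core {Ω : Type*} [MeasurableSpace Ω] (α : ℝ) (hα : 0 ≤ α)
    (W : PerturbedWalk α Ω) (i : ℤ) (hi : 1 < i) :
    wt α (0, i) [(1, i)] + wt α (0, i) [(0, i + 1), (0, i), (1, i)]
      ≤ (W.P (0, i) {ω | ∃ n, entersConeAt W.X n ω ∧ W.X n ω = (1, i)}).toReal := by
  haveI := W.prob (0, i)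
  set E := {ω | ∃ n, entersConeAt W.X n ω ∧ W.X n ω = (1, i)} with hE
  set l1 : List (ℤ × ℤ) := [(1, i)] with hl1
  set l3 : List (ℤ × ℤ) := [(0, i + 1), (0, i), (1, i)] with hl3
  set C1 := {ω | ∀ m ≤ l1.length, W.X m ω = ((0, i) :: l1).getD m (0, 0)} with hC1
  set C3 := {ω | ∀ m ≤ l3.length, W.X m ω = ((0, i) :: l3).getD m (0, 0)} with hC3
  have hsub1 : C1 ⊆ E := by
    intro ω hω
    have h1 : W.X 1 ω = (1, i) := hω 1 (by rw [hl1]; norm_num)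
    refine ⟨1, ⟨one_pos, ?_, ?_⟩, h1⟩
    · rw [h1]; exact ⟨by norm_num, by omega⟩
    · intro m hm hmn; omega
  have hsub3 : C3 ⊆ E := by
    intro ω hω
    have h1 : W.X 1 ω = (0, i + 1) := hω 1 (by rw [hl3]; norm_num)
    have h2 : W.X 2 ω = (0, i) := hω 2 (by rw [hl3]; norm_num)
    have h3 : W.X 3 ω = (1, i) := hω 3 (by rw [hl3]; norm_num)
    refine ⟨3, ⟨by norm_num, ?_, ?_⟩, h3⟩
    · rw [h3]; exact ⟨by norm_num, by omega⟩
    · intro m hm hmn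
      interval_cases m
      · rw [h1]; intro hc; exact hc.1 rfl
      · rw [h2]; intro hc; exact hc.1 rfl
  have hdisj : Disjoint C1 C3 := by
    rw [Set.disjoint_left]
    intro ω h1 h3
    have e1 : W.X 1 ω = (1, i) := h1 1 (by rw [hl1]; norm_num)
    have e2 : W.X 1 ω = (0, i + 1) := h3 1 (by rw [hl3]; norm_num)
    rw [e1] at e2
    simp [Prod.ext_iff] at e2
  have hm3 : MeasurableSet C3 := cyl_mble α W _ _
  calc wt α (0, i) l1 + wt α (0, i) l3
      = (W.P (0, i) C1).toReal + (W.P (0, i) C3).toReal := by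
        rw [cyl_meas α W (0, i) l1, cyl_meas α W (0, i) l3]
    _ = (W.P (0, i) C1 + W.P (0, i) C3).toReal :=
        (ENNReal.toReal_add (measure_ne_top _ _) (measure_ne_top _ _)).symm
    _ = (W.P (0, i) (C1 ∪ C3)).toReal := by rw [measure_union hdisj hm3]
    _ ≤ (W.P (0, i) E).toReal :=
        ENNReal.toReal_mono (measure_ne_top _ _)
          (measure_mono (Set.union_subset hsub1 hsub3))

lemma not_cone_mem_axes (z : ℤ × ℤ) (h : z ∉ coneK) : z ∈ axesKc := by
  unfold coneK at h
  unfold axesKc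
  by_contra hc
  exact h ⟨fun h1 => hc (Or.inl h1), fun h2 => hc (Or.inr h2)⟩

lemma q_to_cone_zero (α : ℝ) (i : ℤ) (hi : 1 < i) (z : ℤ × ℤ)
    (hz : z ∈ axesKc) (hzb : z ≠ (0, i)) : q α z (1, i) = 0 := by
  obtain ⟨z1, z2⟩ := z
  have hz' : z1 = 0 ∨ z2 = 0 := hz
  by_cases h1 : z1 = 0
  · subst h1
    by_cases h2 : z2 = 0
    · subst h2
      rw [q_orig, if_neg]
      simp [adj]
      omega
    · have hne1 : ¬((1, i) = ((0 : ℤ), z2 + Int.sign z2) ∨ (1, i) = ((1 : ℤ), z2)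
          ∨ (1, i) = ((-1 : ℤ), z2)) := by
        simp only [Prod.mk.injEq, not_or]
        refine ⟨by simp, ?_, by simp⟩
        rintro ⟨-, h⟩
        exact hzb (by rw [h])
      have hne2 : ¬((1, i) = ((0 : ℤ), z2 - Int.sign z2)) := by
        simp [Prod.ext_iff]
      rw [q_vert α z2 h2, if_neg hne1, if_neg hne2]
  · have h2 : z2 = 0 := by tauto
    subst h2
    rw [q_horiz α z1 h1, if_neg, if_neg]
    · simp [Prod.ext_iff]; omega
    · simp [Prod.ext_iff]; omega

lemma getD_eq_get (l : List (ℤ × ℤ)) (n : ℕ) (d : ℤ × ℤ) (h : n < l.length) :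
    l.getD n d = l[n] := by
  simp [List.getD_eq_getElem?_getD, List.getElem?_eq_getElem h]

lemma cyl_sum_bound (α : ℝ) (hα1 : 1 < α) (i : ℤ) (hi : 1 < i)
    (s : Finset {l : List (ℤ × ℤ) // ∀ v ∈ l, v ∈ axesKc}) :
    ∑ l ∈ s, wt α (0, i) (l.1 ++ [(1, i)])
      ≤ (1 / (4 * (i : ℝ) ^ α)) * (1 - (1 / (4 * (i : ℝ) ^ α) + gg α i (i - 1)))⁻¹ := by
  have hα : (0:ℝ) ≤ α := by linarith
  have hrw : ∀ l ∈ s, wt α (0, i) (l.1 ++ [(1, i)])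
      = wt α (0, i) l.1 * q α (endv (0, i) l.1) (1, i) := by
    intro l _
    rw [wt_append, wt_cons, wt_nil, mul_one]
  rw [Finset.sum_congr rfl hrw,
    ← Finset.sum_filter_add_sum_filter_not s (fun l => endv (0, i) l.1 = (0, i))]
  have hzero : ∑ l ∈ s.filter (fun l => ¬endv (0, i) l.1 = (0, i)),
      wt α (0, i) l.1 * q α (endv (0, i) l.1) (1, i) = 0 := by
    apply Finset.sum_eq_zero
    intro l hl
    rw [Finset.mem_filter] at hl
    have hne : l.1 ≠ [] := by
      intro h
      exact hl.2 (by rw [h]; rfl)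
    have hax : endv (0, i) l.1 ∈ axesKc := l.2 _ (endv_mem _ _ hne)
    rw [q_to_cone_zero α i hi _ hax hl.2, mul_zero]
  rw [hzero, add_zero]
  have hq : ∀ l ∈ s.filter (fun l => endv (0, i) l.1 = (0, i)),
      wt α (0, i) l.1 * q α (endv (0, i) l.1) (1, i)
        = (1 / (4 * (i : ℝ) ^ α)) * wt α (0, i) l.1 := by
    intro l hl
    rw [(Finset.mem_filter.mp hl).2, q_vert_side α i (by omega)]
    ring
  rw [Finset.sum_congr rfl hq, ← Finset.mul_sum]
  have hupos : (0:ℝ) ≤ 1 / (4 * (i : ℝ) ^ α) := by positivity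
  apply mul_le_mul_of_nonneg_left ?_ hupos
  -- sum over loops
  have hinj : ∀ x ∈ s.filter (fun l => endv (0, i) l.1 = (0, i)),
      ∀ y ∈ s.filter (fun l => endv (0, i) l.1 = (0, i)), x.1 = y.1 → x = y :=
    fun x _ y _ h => Subtype.ext h
  rw [← Finset.sum_image (f := wt α (0, i)) hinj]
  set F := (s.filter (fun l => endv (0, i) l.1 = (0, i))).image (fun l => l.1) with hF
  apply loop_sum_le α hα1 i hi (F.sup List.length) F
  intro l hl
  refine ⟨?_, Finset.le_sup hl⟩
  rw [hF] at hl
  obtain ⟨l', hl', rfl⟩ := Finset.mem_image.mp hl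
  exact ⟨(Finset.mem_filter.mp hl').2, l'.2⟩

lemma upper_core {Ω : Type*} [MeasurableSpace Ω] (α : ℝ) (hα1 : 1 < α)
    (W : PerturbedWalk α Ω) (i : ℤ) (hi : 1 < i) :
    (W.P (0, i) {ω | ∃ n, entersConeAt W.X n ω ∧ W.X n ω = (1, i)}).toReal
      ≤ (1 / (4 * (i : ℝ) ^ α)) * (1 - (1 / (4 * (i : ℝ) ^ α) + gg α i (i - 1)))⁻¹ := by
  have hα : (0:ℝ) ≤ α := by linarith
  haveI := W.prob (0, i)
  set E := {ω | ∃ n, entersConeAt W.X n ω ∧ W.X n ω = (1, i)} with hE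
  set A := {ω | W.X 0 ω = ((0 : ℤ), i)} with hA
  have hmA : MeasurableSet A := (W.meas 0) (measurableSet_singleton _)
  have hA1 : W.P (0, i) A = 1 := by
    have h0 := W.fdd (0, i) 0 (fun _ => (0, i)) rfl
    rw [Finset.range_zero, Finset.prod_empty] at h0
    have hset : {ω | ∀ m ≤ 0, W.X m ω = (0, i)} = A := by
      ext ω
      simp [Nat.le_zero, hA]
    rw [hset] at h0
    exact (ENNReal.toReal_eq_one_iff _).mp h0
  have hAc : W.P (0, i) Aᶜ = 0 := by
    rw [measure_compl hmA (measure_ne_top _ _), hA1, measure_univ, tsub_self]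
  set Cyl : {l : List (ℤ × ℤ) // ∀ v ∈ l, v ∈ axesKc} → Set Ω := fun l =>
    {ω | ∀ m ≤ (l.1 ++ [(1, i)]).length,
      W.X m ω = ((0, i) :: (l.1 ++ [(1, i)])).getD m (0, 0)} with hCyl
  have hcover : E ∩ A ⊆ ⋃ l, Cyl l := by
    rintro ω ⟨⟨n, ⟨hn0, hcone, hmin⟩, hval⟩, hA0⟩
    obtain ⟨k, rfl⟩ := Nat.exists_eq_succ_of_ne_zero hn0.ne'
    have hax : ∀ v ∈ (List.range k).map (fun m => W.X (m + 1) ω), v ∈ axesKc := by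
      intro v hv
      rw [List.mem_map] at hv
      obtain ⟨m, hm, rfl⟩ := hv
      rw [List.mem_range] at hm
      exact not_cone_mem_axes _ (hmin (m + 1) (Nat.succ_pos m) (by omega))
    refine Set.mem_iUnion.mpr ⟨⟨(List.range k).map (fun m => W.X (m + 1) ω), hax⟩, ?_⟩
    intro m hm
    have hlenl : ((List.range k).map (fun m => W.X (m + 1) ω)).length = k := by simp
    match m with
    | 0 => exact hA0
    | (j + 1) =>
      rw [List.getD_cons_succ]
      have hjk : j ≤ k := by
        rw [List.length_append, hlenl] at hm
        simpa using Nat.le_of_succ_le_succ hm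
      rcases lt_or_eq_of_le hjk with hjlt | hjeq
      · have hjl : j < ((List.range k).map (fun m => W.X (m + 1) ω)).length := by
          rw [hlenl]; exact hjlt
        rw [getD_eq_get _ j _
            (by simp only [List.length_append, hlenl, List.length_singleton]; omega),
          List.getElem_append_left hjl]
        simp only [List.getElem_map, List.getElem_range]
      · subst hjeq
        rw [getD_eq_get _ j _
            (by simp only [List.length_append, hlenl, List.length_singleton]; omega),
          List.getElem_concat_length hlenl.symm]
        exact hval
  have hstep1 : W.P (0, i) E ≤ W.P (0, i) (E ∩ A) := by
    calc W.P (0, i) E ≤ W.P (0, i) ((E ∩ A) ∪ Aᶜ) := by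
          apply measure_mono
          intro ω hω
          by_cases h : ω ∈ A
          · exact Or.inl ⟨hω, h⟩
          · exact Or.inr h
      _ ≤ W.P (0, i) (E ∩ A) + W.P (0, i) Aᶜ := measure_union_le _ _
      _ = W.P (0, i) (E ∩ A) := by rw [hAc, add_zero]
  have hstep2 : W.P (0, i) (E ∩ A) ≤ ∑' l, W.P (0, i) (Cyl l) :=
    le_trans (measure_mono hcover) (measure_iUnion_le _)
  have hterm : ∀ l, W.P (0, i) (Cyl l) = ENNReal.ofReal (wt α (0, i) (l.1 ++ [(1, i)])) := by
    intro l
    rw [← cyl_meas α W (0, i) (l.1 ++ [(1, i)]),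
      ENNReal.ofReal_toReal (measure_ne_top _ _)]
  have hstep3 : (∑' l, W.P (0, i) (Cyl l))
      ≤ ENNReal.ofReal ((1 / (4 * (i : ℝ) ^ α))
          * (1 - (1 / (4 * (i : ℝ) ^ α) + gg α i (i - 1)))⁻¹) := by
    rw [ENNReal.tsum_eq_iSup_sum]
    apply iSup_le
    intro s
    calc ∑ l ∈ s, W.P (0, i) (Cyl l)
        = ∑ l ∈ s, ENNReal.ofReal (wt α (0, i) (l.1 ++ [(1, i)])) :=
          Finset.sum_congr rfl (fun l _ => hterm l)
      _ = ENNReal.ofReal (∑ l ∈ s, wt α (0, i) (l.1 ++ [(1, i)])) :=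
          (ENNReal.ofReal_sum_of_nonneg (fun l _ => wt_nonneg α hα _ _)).symm
      _ ≤ _ := ENNReal.ofReal_le_ofReal (cyl_sum_bound α hα1 i hi s)
  have hfinal : W.P (0, i) E ≤ ENNReal.ofReal ((1 / (4 * (i : ℝ) ^ α))
      * (1 - (1 / (4 * (i : ℝ) ^ α) + gg α i (i - 1)))⁻¹) :=
    le_trans hstep1 (le_trans hstep2 hstep3)
  have hM : (0:ℝ) ≤ (1 / (4 * (i : ℝ) ^ α))
      * (1 - (1 / (4 * (i : ℝ) ^ α) + gg α i (i - 1)))⁻¹ := by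
    have h1 : (0:ℝ) < 1 - (1 / (4 * (i : ℝ) ^ α) + gg α i (i - 1)) := by
      have := H_le_58 α hα1.le i hi
      linarith
    have h2 : (0:ℝ) ≤ 1 / (4 * (i : ℝ) ^ α) := by positivity
    positivity
  exact ENNReal.toReal_le_of_le_ofReal hM hfinal

lemma rpow_neg_eq (α : ℝ) (i : ℤ) (hi : 1 < i) : (i : ℝ) ^ (-α) = ((i : ℝ) ^ α)⁻¹ :=
  Real.rpow_neg (by exact_mod_cast (by omega : (0:ℤ) ≤ i)) α

lemma u_eq (α : ℝ) (i : ℤ) (hi : 1 < i) :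
    1 / (4 * (i : ℝ) ^ α) = (1 / 4) * (i : ℝ) ^ (-α) := by
  rw [rpow_neg_eq α i hi, one_div, mul_inv, ← one_div (4:ℝ)]

lemma M_le (α : ℝ) (hα1 : 1 < α) (i : ℤ) (hi : 1 < i) :
    (1 - (1 / (4 * (i : ℝ) ^ α) + gg α i (i - 1)))⁻¹
      ≤ 1 + (8 / 3) * (1 / (4 * (i : ℝ) ^ α) + gg α i (i - 1)) := by
  have hα : (0:ℝ) ≤ α := by linarith
  have h58 := H_le_58 α hα1.le i hi
  have hpos := H_pos α hα i hi
  have h1H : (0:ℝ) < 1 - (1 / (4 * (i : ℝ) ^ α) + gg α i (i - 1)) := by linarith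
  rw [← one_div, div_le_iff₀ h1H]
  nlinarith

lemma H_le_c (α : ℝ) (hα1 : 1 < α) (i : ℤ) (hi : 1 < i) :
    1 / (4 * (i : ℝ) ^ α) + gg α i (i - 1)
      ≤ (1 / 4 + (2:ℝ) ^ (α - 1)) * (i : ℝ) ^ (-α) := by
  have hα : (0:ℝ) ≤ α := by linarith
  have hx : (0:ℝ) < (i : ℝ) ^ α :=
    lt_of_lt_of_le one_pos (one_le_rpow_int α hα i (by omega))
  have hy : (0:ℝ) < ((i - 1 : ℤ) : ℝ) ^ α :=
    lt_of_lt_of_le one_pos (one_le_rpow_int α hα (i - 1) (by omega))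
  have hggval : gg α i (i - 1) = 1 / (2 * ((i - 1 : ℤ) : ℝ) ^ α) := by
    have h := gg_succ α i (i - 1) (by omega)
    rw [show (i:ℤ) - 1 + 1 = i by ring, gg_stop α i i le_rfl, mul_one] at h
    exact h
  have hkey : (i : ℝ) ^ α ≤ (2:ℝ) ^ α * ((i - 1 : ℤ) : ℝ) ^ α := by
    have h1 : (i : ℝ) ≤ 2 * ((i - 1 : ℤ) : ℝ) := by
      push_cast
      have : (2:ℝ) ≤ (i : ℝ) := by exact_mod_cast hi
      linarith
    have h2 : (i : ℝ) ^ α ≤ (2 * ((i - 1 : ℤ) : ℝ)) ^ α :=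
      Real.rpow_le_rpow (by exact_mod_cast (by omega : (0:ℤ) ≤ i)) h1 hα
    rwa [Real.mul_rpow (by norm_num) (by exact_mod_cast (by omega : (0:ℤ) ≤ i - 1))] at h2
  have h2a : (2:ℝ) ^ (α - 1) = (2:ℝ) ^ α / 2 := by
    rw [Real.rpow_sub (by norm_num), Real.rpow_one]
  have hterm2 : gg α i (i - 1) ≤ (2:ℝ) ^ (α - 1) * (i : ℝ) ^ (-α) := by
    rw [hggval, h2a, rpow_neg_eq α i hi]
    have hconv : (2:ℝ) ^ α / 2 * (((i:ℝ) ^ α)⁻¹) = (2:ℝ) ^ α / (2 * (i:ℝ) ^ α) := by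
      field_simp
    rw [hconv, div_le_div_iff₀ (by positivity) (by positivity)]
    nlinarith
  rw [u_eq α i hi]
  have ht : (0:ℝ) ≤ (i : ℝ) ^ (-α) := Real.rpow_nonneg (by positivity) _
  nlinarith [hterm2]

/-- For `α > 1` there are `c_+ > c_- > 0` with
`1 + c_- i^{-α} ≤ 4 i^α P_{(0,i)}(X_ρ = (1,i)) ≤ 1 + c_+ i^{-α}` for all `i > 1`. -/
theorem exit_sideways_estimate (α : ℝ) (hα : 1 < α) {Ω : Type*} [MeasurableSpace Ω]
    (W : PerturbedWalk α Ω) :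
    ∃ cminus cplus : ℝ, 0 < cminus ∧ cminus < cplus ∧ ∀ i : ℤ, 1 < i →
      1 + cminus * (i : ℝ) ^ (-α) ≤
        4 * (i : ℝ) ^ α *
          (W.P (0, i) {ω | ∃ n, entersConeAt W.X n ω ∧ W.X n ω = (1, i)}).toReal ∧
      4 * (i : ℝ) ^ α *
          (W.P (0, i) {ω | ∃ n, entersConeAt W.X n ω ∧ W.X n ω = (1, i)}).toReal ≤
        1 + cplus * (i : ℝ) ^ (-α) := by
  have hα0 : (0:ℝ) ≤ α := by linarith
  refine ⟨3 / 16, (8 / 3) * (1 / 4 + (2:ℝ) ^ (α - 1)), by norm_num, ?_, ?_⟩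
  · have h2 : (0:ℝ) < (2:ℝ) ^ (α - 1) := Real.rpow_pos_of_pos (by norm_num) _
    nlinarith
  intro i hi
  have hipos : (0:ℤ) < i := by omega
  have hx : (0:ℝ) < (i : ℝ) ^ α :=
    lt_of_lt_of_le one_pos (one_le_rpow_int α hα0 i (by omega))
  have hxne : ((i : ℝ) ^ α) ≠ 0 := ne_of_gt hx
  have htpos : (0:ℝ) < (i : ℝ) ^ (-α) := by
    rw [rpow_neg_eq α i hi]; positivity
  constructor
  · -- lower bound
    have hlow := lower_core α hα0 W i hi
    have hq1 : q α (0, i) (1, i) = 1 / (4 * (i : ℝ) ^ α) := q_vert_side α i hipos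
    have hq2 : q α (0, i) (0, i + 1) = 1 / (4 * (i : ℝ) ^ α) := q_vert_up α i hipos
    have hq3 : q α (0, i + 1) (0, i) = 1 - 3 / (4 * ((i : ℝ) + 1) ^ α) := by
      have h := q_vert_down α (i + 1) (by omega)
      rw [(by ring : (i : ℤ) + 1 - 1 = i)] at h
      push_cast at h
      exact h
    have hw1 : wt α (0, i) [(1, i)] = 1 / (4 * (i : ℝ) ^ α) := by
      rw [wt_cons, wt_nil, hq1, mul_one]
    have hw3 : wt α (0, i) [(0, i + 1), (0, i), (1, i)]
        = (1 / (4 * (i : ℝ) ^ α)) * ((1 - 3 / (4 * ((i : ℝ) + 1) ^ α))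
          * ((1 / (4 * (i : ℝ) ^ α)) * 1)) := by
      rw [wt_cons, wt_cons, wt_cons, wt_nil, hq1, hq2, hq3]
    have hd : (3:ℝ) / 4 ≤ 1 - 3 / (4 * ((i : ℝ) + 1) ^ α) := by
      have h3 : (3:ℝ) ≤ ((i : ℝ) + 1) ^ α := by
        have hc : (3:ℝ) ≤ (i : ℝ) + 1 := by
          have : (2:ℝ) ≤ (i : ℝ) := by exact_mod_cast hi
          linarith
        calc (3:ℝ) ≤ (i : ℝ) + 1 := hc
          _ = ((i : ℝ) + 1) ^ (1:ℝ) := (Real.rpow_one _).symm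
          _ ≤ ((i : ℝ) + 1) ^ α := Real.rpow_le_rpow_of_exponent_le (by linarith) hα.le
      have h4 : (3:ℝ) / (4 * ((i : ℝ) + 1) ^ α) ≤ 3 / 12 :=
        div_le_div_of_nonneg_left (by norm_num) (by norm_num) (by linarith)
      linarith
    have hP : (1 / (4 * (i : ℝ) ^ α)) * (1 + (3 / 4) * (1 / (4 * (i : ℝ) ^ α)))
        ≤ (W.P (0, i) {ω | ∃ n, entersConeAt W.X n ω ∧ W.X n ω = (1, i)}).toReal := by
      refine le_trans ?_ hlow
      rw [hw1, hw3]
      have hu0 : (0:ℝ) < 1 / (4 * (i : ℝ) ^ α) := by positivity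
      nlinarith [mul_le_mul_of_nonneg_right (mul_le_mul_of_nonneg_left hd hu0.le) hu0.le]
    calc 1 + (3 / 16 : ℝ) * (i : ℝ) ^ (-α)
        = 4 * (i : ℝ) ^ α * ((1 / (4 * (i : ℝ) ^ α)) * (1 + (3 / 4) * (1 / (4 * (i : ℝ) ^ α)))) := by
          rw [rpow_neg_eq α i hi]
          field_simp
          ring
      _ ≤ _ := by
          apply mul_le_mul_of_nonneg_left hP (by positivity)
  · -- upper bound
    have hup := upper_core α hα W i hi
    have hMle := M_le α hα i hi
    have hHc := H_le_c α hα i hi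
    calc 4 * (i : ℝ) ^ α *
          (W.P (0, i) {ω | ∃ n, entersConeAt W.X n ω ∧ W.X n ω = (1, i)}).toReal
        ≤ 4 * (i : ℝ) ^ α * ((1 / (4 * (i : ℝ) ^ α))
            * (1 - (1 / (4 * (i : ℝ) ^ α) + gg α i (i - 1)))⁻¹) :=
          mul_le_mul_of_nonneg_left hup (by positivity)
      _ = (1 - (1 / (4 * (i : ℝ) ^ α) + gg α i (i - 1)))⁻¹ := by
          field_simp
      _ ≤ 1 + (8 / 3) * (1 / (4 * (i : ℝ) ^ α) + gg α i (i - 1)) := hMle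
      _ ≤ 1 + (8 / 3) * (1 / 4 + (2:ℝ) ^ (α - 1)) * (i : ℝ) ^ (-α) := by
          linarith [hHc]
end
end

section
/- For the perturbed walk with α > 1, there exists a constant C̃ with 0 < C̃ < 1 such that for all z ∈ K^c, P_z(T_z < ρ) ≤ C̃, where T_z is the first return time to z and ρ the first entrance time into the cones. -/
/-!
From every axis site there is a finite path into the cones that never revisits its starting
point and whose probability is bounded below uniformly in the site; following it rules out a
return before entering the cones. From `(n, 0)` the path walks straight to `(1, 0)` and steps
sideways into the cone, with probability
`(1/4) ∏_{j=2}^{n} (1 - 3/(4 j^α)) ≥ (1/4) exp(-(3/2) ζ(α))`, which is where `α > 1` enters. The origin steps to `(1, 0)` and then `(1, 1)`, and the other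
half-axes follow from the symmetries of the kernel.
-/

open MeasureTheory Filter Asymptotics
open scoped Classical ENNReal

noncomputable section

open Real

lemma q_swap (α : ℝ) (z w : ℤ × ℤ) : q α z.swap w.swap = q α z w := by
  rcases z with ⟨a, b⟩; rcases w with ⟨c, d⟩
  simp only [q, adj, Prod.swap_prod_mk, Prod.mk.injEq]
  rcases eq_or_ne a 0 with ha | ha <;> rcases eq_or_ne b 0 with hb | hb <;>
    simp [ha, hb, and_comm, Nat.add_comm]

lemma q_neg_fst (α : ℝ) (z w : ℤ × ℤ) : q α (-z.1, z.2) (-w.1, w.2) = q α z w := by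
  rcases z with ⟨a, b⟩; rcases w with ⟨c, d⟩
  have hac : (a - c).natAbs = (c - a).natAbs := by omega
  simp only [q, adj, Prod.mk.injEq, Int.sign_neg, Int.natAbs_neg, neg_eq_zero, neg_sub_neg, hac]
  rcases eq_or_ne a 0 with ha | ha <;> rcases eq_or_ne b 0 with hb | hb <;>
    simp [ha, hb, neg_eq_iff_eq_neg, or_comm, sub_eq_add_neg, add_comm]

lemma q_origin_right (α : ℝ) : q α (0, 0) (1, 0) = 1 / 4 := by
  simp [q, adj]

lemma q_axis_inward (α : ℝ) (m : ℕ) :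
    q α ((m + 1 : ℕ), 0) (m, 0) = 1 - 3 / (4 * ((m + 1 : ℕ) : ℝ) ^ α) := by
  have hsign : ((m + 1 : ℕ) : ℤ).sign = 1 := Int.sign_eq_one_iff_pos.mpr (by omega)
  unfold q
  rw [if_pos ⟨rfl, by omega⟩, if_neg, if_pos]
  · rfl
  all_goals dsimp only; simp only [hsign, Prod.mk.injEq, and_true]; omega

lemma q_axis_side (α : ℝ) : q α (1, 0) (1, 1) = 1 / 4 := by
  simp [q]

def pathWeight (α : ℝ) (path : ℕ → ℤ × ℤ) (N : ℕ) : ℝ :=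
  ∏ i ∈ Finset.range N, q α (path i) (path (i + 1))

lemma pathWeight_succ (α : ℝ) (path : ℕ → ℤ × ℤ) (N : ℕ) :
    pathWeight α path (N + 1) = q α (path 0) (path 1) * pathWeight α (fun i => path (i + 1)) N := by
  rw [pathWeight, Finset.prod_range_succ', mul_comm]
  rfl

lemma pathWeight_comp {α : ℝ} {e : ℤ × ℤ → ℤ × ℤ} (he : ∀ z w, q α (e z) (e w) = q α z w)
    (path : ℕ → ℤ × ℤ) (N : ℕ) : pathWeight α (e ∘ path) N = pathWeight α path N :=
  Finset.prod_congr rfl fun _ _ => he _ _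

def EscapesToCone (path : ℕ → ℤ × ℤ) (N : ℕ) : Prop :=
  0 < N ∧ path N ∈ coneK ∧ ∀ i, 0 < i → i ≤ N → path i ≠ path 0

lemma EscapesToCone.comp {path : ℕ → ℤ × ℤ} {N : ℕ} {e : ℤ × ℤ → ℤ × ℤ}
    (h : EscapesToCone path N) (he : Function.Injective e) (hK : ∀ z ∈ coneK, e z ∈ coneK) :
    EscapesToCone (e ∘ path) N :=
  ⟨h.1, hK _ h.2.1, fun i hi hiN => he.ne (h.2.2 i hi hiN)⟩

def axisPath (n i : ℕ) : ℤ × ℤ := if i < n then ((n - i : ℕ), 0) else (1, 1)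

lemma axisPath_succ (n : ℕ) : (fun i => axisPath (n + 1) (i + 1)) = axisPath n := by
  funext i
  simp only [axisPath, Nat.add_lt_add_iff_right, Nat.add_sub_add_right]

lemma escapesToCone_axisPath {n : ℕ} (hn : 0 < n) : EscapesToCone (axisPath n) n := by
  refine ⟨hn, by simp [axisPath, coneK], fun i hi hin => ?_⟩
  simp only [axisPath, if_pos hn, Nat.sub_zero]
  split_ifs <;> simp [Prod.ext_iff]; omega

lemma pathWeight_axisPath (α : ℝ) {n : ℕ} (hn : 0 < n) :
    pathWeight α (axisPath n) n =
      (∏ j ∈ Finset.Ico 2 (n + 1), (1 - 3 / (4 * (j : ℝ) ^ α))) / 4 := by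
  induction n, hn using Nat.le_induction with
  | base => simp [pathWeight, axisPath, q_axis_side]
  | succ n hn ih =>
    have h0 : axisPath (n + 1) 0 = (((n + 1 : ℕ) : ℤ), 0) := by simp [axisPath]
    have h1 : axisPath (n + 1) 1 = ((n : ℤ), 0) := by simp [axisPath]; omega
    rw [pathWeight_succ, axisPath_succ, ih, h0, h1, q_axis_inward,
      Finset.prod_Ico_succ_top (show 2 ≤ n + 1 by omega)]
    ring

lemma exp_neg_two_mul_le_one_sub {x : ℝ} (h0 : 0 ≤ x) (h : x ≤ 1 / 2) :
    exp (-(2 * x)) ≤ 1 - x := by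
  rw [exp_neg, inv_le_iff_one_le_mul₀ (exp_pos _)]
  nlinarith [add_one_le_exp (2 * x), exp_pos (2 * x)]

lemma exp_neg_two_mul_tsum_le_prod_one_sub {ι : Type*} {x : ι → ℝ} (hx : Summable x)
    (h0 : ∀ i, 0 ≤ x i) (s : Finset ι) (hs : ∀ i ∈ s, x i ≤ 1 / 2) :
    exp (-(2 * ∑' i, x i)) ≤ ∏ i ∈ s, (1 - x i) :=
  calc exp (-(2 * ∑' i, x i)) ≤ exp (-(2 * ∑ i ∈ s, x i)) := by
        gcongr; exact hx.sum_le_tsum s fun i _ => h0 i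
    _ = ∏ i ∈ s, exp (-(2 * x i)) := by
        rw [← exp_sum, Finset.mul_sum, Finset.sum_neg_distrib]
    _ ≤ ∏ i ∈ s, (1 - x i) :=
        Finset.prod_le_prod (fun _ _ => (exp_pos _).le)
          fun i hi => exp_neg_two_mul_le_one_sub (h0 i) (hs i hi)

/-- Every inward walk along an axis has probability at least `exp (-2 ∑ 3/(4 j^α)) / 4` by
`exp_neg_two_mul_tsum_le_prod_one_sub`; dividing by `16` instead also covers the two steps out
of the origin. -/
def escapeBound (α : ℝ) : ℝ := exp (-(2 * ∑' j : ℕ, 3 / (4 * (j : ℝ) ^ α))) / 16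

lemma escapeBound_pos (α : ℝ) : 0 < escapeBound α := by
  unfold escapeBound; positivity

lemma escapeBound_le (α : ℝ) : escapeBound α ≤ 1 / 16 := by
  have : 0 ≤ ∑' j : ℕ, 3 / (4 * (j : ℝ) ^ α) := tsum_nonneg fun j => by positivity
  unfold escapeBound
  gcongr
  exact exp_le_one_iff.mpr (by linarith)

lemma escapeBound_le_pathWeight_axisPath {α : ℝ} (hα : 1 < α) {n : ℕ} (hn : 0 < n) :
    escapeBound α ≤ pathWeight α (axisPath n) n := by
  have hsum : Summable fun j : ℕ => 3 / (4 * (j : ℝ) ^ α) :=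
    ((summable_one_div_nat_rpow.mpr hα).mul_left (3 / 4)).congr fun j => by
      rw [div_mul_div_comm, mul_one]
  have hsmall : ∀ j ∈ Finset.Ico 2 (n + 1), 3 / (4 * (j : ℝ) ^ α) ≤ 1 / 2 := by
    intro j hj
    have hj2 : (2 : ℝ) ≤ j := by exact_mod_cast (Finset.mem_Ico.mp hj).1
    have : (j : ℝ) ≤ (j : ℝ) ^ α := self_le_rpow_of_one_le (by linarith) hα.le
    rw [div_le_iff₀ (by positivity)]
    linarith
  have := exp_neg_two_mul_tsum_le_prod_one_sub hsum (fun j => by positivity) _ hsmall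
  rw [pathWeight_axisPath α hn, escapeBound]
  linarith [exp_pos (-(2 * ∑' j : ℕ, 3 / (4 * (j : ℝ) ^ α)))]

def originPath (i : ℕ) : ℤ × ℤ := if i = 0 then (0, 0) else axisPath 1 (i - 1)

lemma escapesToCone_originPath : EscapesToCone originPath 2 := by
  refine ⟨two_pos, by simp [originPath, axisPath, coneK], fun i hi hi2 => ?_⟩
  interval_cases i <;> simp [originPath, axisPath]

lemma pathWeight_originPath (α : ℝ) : pathWeight α originPath 2 = 1 / 16 := by
  simp [pathWeight, Finset.prod_range_succ, originPath, axisPath, q_origin_right, q_axis_side]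
  norm_num

def HasEscapePath (α c : ℝ) (z : ℤ × ℤ) : Prop :=
  ∃ path N, path 0 = z ∧ EscapesToCone path N ∧ c ≤ pathWeight α path N

lemma HasEscapePath.map {α c : ℝ} {z : ℤ × ℤ} (h : HasEscapePath α c z) {e : ℤ × ℤ → ℤ × ℤ}
    (he : Function.Injective e) (hK : ∀ z ∈ coneK, e z ∈ coneK)
    (hq : ∀ z w, q α (e z) (e w) = q α z w) : HasEscapePath α c (e z) := by
  obtain ⟨path, N, rfl, hesc, hweight⟩ := h
  exact ⟨e ∘ path, N, rfl, hesc.comp he hK, (pathWeight_comp hq path N).symm ▸ hweight⟩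

lemma hasEscapePath_natCast {α : ℝ} (hα : 1 < α) (n : ℕ) :
    HasEscapePath α (escapeBound α) ((n : ℤ), 0) := by
  rcases Nat.eq_zero_or_pos n with rfl | hn
  · exact ⟨originPath, 2, rfl, escapesToCone_originPath,
      (pathWeight_originPath α).symm ▸ escapeBound_le α⟩
  · exact ⟨axisPath n, n, by simp [axisPath, hn], escapesToCone_axisPath hn,
      escapeBound_le_pathWeight_axisPath hα hn⟩

lemma hasEscapePath_fst_axis {α : ℝ} (hα : 1 < α) (a : ℤ) :
    HasEscapePath α (escapeBound α) (a, 0) := by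
  obtain ⟨n, rfl | rfl⟩ := a.eq_nat_or_neg
  · exact hasEscapePath_natCast hα n
  · refine (hasEscapePath_natCast hα n).map (e := fun z => (-z.1, z.2)) ?_ ?_ (q_neg_fst α)
    · intro z w h
      simpa [Prod.ext_iff] using h
    · intro z hz
      exact ⟨neg_ne_zero.mpr hz.1, hz.2⟩

lemma hasEscapePath_of_mem_axesKc {α : ℝ} (hα : 1 < α) {z : ℤ × ℤ} (hz : z ∈ axesKc) :
    HasEscapePath α (escapeBound α) z := by
  obtain ⟨a, b⟩ := z
  rcases hz with rfl | rfl
  · exact (hasEscapePath_fst_axis hα b).map Prod.swap_injective (fun z hz => ⟨hz.2, hz.1⟩)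
      (q_swap α)
  · exact hasEscapePath_fst_axis hα a

namespace PerturbedWalk

variable {α : ℝ} {Ω : Type*} [MeasurableSpace Ω] (W : PerturbedWalk α Ω)

lemma measurableSet_cylinder (path : ℕ → ℤ × ℤ) (N : ℕ) :
    MeasurableSet {ω | ∀ i ≤ N, W.X i ω = path i} := by
  simp only [Set.ofPred_forall]
  exact .iInter fun i => .iInter fun _ => W.meas i (measurableSet_singleton _)

lemma prob_return_before_cone_le {path : ℕ → ℤ × ℤ} {N : ℕ} (h : EscapesToCone path N) :
    (W.P (path 0) {ω | ∃ n, 0 < n ∧ W.X n ω = path 0 ∧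
      ∀ m, 0 < m → m ≤ n → W.X m ω ∈ axesKc}).toReal ≤ 1 - pathWeight α path N := by
  have := W.prob (path 0)
  obtain ⟨hN, hcone, havoid⟩ := h
  set cylinder := {ω | ∀ i ≤ N, W.X i ω = path i}
  have hsub : {ω | ∃ n, 0 < n ∧ W.X n ω = path 0 ∧ ∀ m, 0 < m → m ≤ n → W.X m ω ∈ axesKc}
      ⊆ cylinderᶜ := by
    rintro ω ⟨n, hn, hreturn, haxes⟩ hω
    rcases le_or_gt n N with hnN | hNn
    · exact havoid n hn hnN ((hω n hnN).symm.trans hreturn)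
    · have hN_axes := haxes N hN hNn.le
      rw [hω N le_rfl] at hN_axes
      exact hN_axes.elim hcone.1 hcone.2
  calc _ ≤ (W.P (path 0)).real cylinderᶜ := measureReal_mono hsub
    _ = 1 - pathWeight α path N := by
      rw [probReal_compl_eq_one_sub (W.measurableSet_cylinder path N), Measure.real,
        W.fdd _ N path rfl, pathWeight]

end PerturbedWalk

/-- For `α > 1`, the probability of returning to the starting axis site before entering
the cones is bounded away from `1`, uniformly: there is `C̃ ∈ (0,1)` with
`P_z(T_z < ρ) ≤ C̃` for all `z ∈ K^c`. -/
theorem return_before_exit_bounded (α : ℝ) (hα : 1 < α) {Ω : Type*} [MeasurableSpace Ω]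
    (W : PerturbedWalk α Ω) :
    ∃ C : ℝ, 0 < C ∧ C < 1 ∧ ∀ z ∈ axesKc,
      (W.P z {ω | ∃ n, 0 < n ∧ W.X n ω = z ∧
        ∀ m, 0 < m → m ≤ n → W.X m ω ∈ axesKc}).toReal ≤ C := by
  refine ⟨1 - escapeBound α, by linarith [escapeBound_le α], by linarith [escapeBound_pos α],
    fun z hz => ?_⟩
  obtain ⟨path, N, rfl, hesc, hweight⟩ := hasEscapePath_of_mem_axesKc hα hz
  linarith [W.prob_return_before_cone_le hesc]

end
end

section
/- For the perturbed walk with α > 1 and any β > 0 with α − β > 1, there exists M > 0 such that for all z ∈ K^c, E_z[‖X_ρ‖^β] ≤ M, i.e., the β-th moment of the exit position from the axes is bounded uniformly over starting points on the axes. -/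
open MeasureTheory Filter Asymptotics
open scoped Classical ENNReal

noncomputable section

namespace ExitAux


lemma not_coneK_iff {z : ℤ × ℤ} : z ∉ coneK ↔ z.1 = 0 ∨ z.2 = 0 := by
  simp [coneK]; tauto

lemma axes_iff {z : ℤ × ℤ} : z ∈ axesKc ↔ z ∉ coneK := by
  rw [not_coneK_iff]; rfl

lemma one_le_rpow_natAbs {α : ℝ} (hα : 0 ≤ α) {a : ℤ} (ha : a ≠ 0) :
    1 ≤ ((a.natAbs : ℝ)) ^ α :=
  Real.one_le_rpow (by exact_mod_cast Int.natAbs_pos.mpr ha) hα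

lemma denom_pos {α : ℝ} (hα : 0 ≤ α) {a : ℤ} (ha : a ≠ 0) :
    0 < 4 * ((a.natAbs : ℝ)) ^ α := by
  have := one_le_rpow_natAbs hα ha; linarith

lemma sub_three_div_nonneg {α : ℝ} (hα : 0 ≤ α) {a : ℤ} (ha : a ≠ 0) :
    0 ≤ 1 - 3 / (4 * ((a.natAbs : ℝ)) ^ α) := by
  have h := one_le_rpow_natAbs hα ha
  have : 3 / (4 * ((a.natAbs : ℝ)) ^ α) ≤ 1 := by
    rw [div_le_one (by linarith)]; linarith
  linarith

lemma q_nonneg {α : ℝ} (hα : 0 ≤ α) (z w : ℤ × ℤ) : 0 ≤ q α z w := by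
  unfold q
  split_ifs with h1 h2 h3 h4 h5 h6 h7
  · positivity
  · exact sub_three_div_nonneg hα h1.2
  · exact le_refl 0
  · positivity
  · exact sub_three_div_nonneg hα h4.2
  · exact le_refl 0
  · positivity
  · exact le_refl 0



lemma adj_swap (z w : ℤ × ℤ) : adj (Prod.swap z) (Prod.swap w) ↔ adj z w := by
  unfold adj; cases z; cases w; simp [Prod.swap]; omega

lemma q_swap (α : ℝ) (z w : ℤ × ℤ) : q α (Prod.swap z) (Prod.swap w) = q α z w := by
  obtain ⟨a, b⟩ := z
  obtain ⟨c, d⟩ := w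
  by_cases h1 : b = 0 ∧ a ≠ 0
  · rw [q, q]
    simp only [Prod.swap_prod_mk, Prod.mk.injEq]
    rw [if_neg (by simp; omega), if_pos (by simpa using ⟨h1.1, h1.2⟩), if_pos h1]
    congr 1
    · exact propext (by tauto)
    · exact if_congr (by tauto) rfl rfl
  · by_cases h2 : a = 0 ∧ b ≠ 0
    · rw [q, q]
      simp only [Prod.swap_prod_mk, Prod.mk.injEq]
      rw [if_pos (by simpa using ⟨h2.1, h2.2⟩), if_neg h1, if_pos h2]
      congr 1
      · exact propext (by tauto)
      · exact if_congr (by tauto) rfl rfl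
    · rw [q, q]
      simp only [Prod.swap_prod_mk]
      rw [if_neg (by simpa using h2), if_neg (by simpa using h1), if_neg h1, if_neg h2]
      exact if_congr (by simpa using adj_swap (a, b) (c, d)) rfl rfl



variable {α β : ℝ}

/-- Lyapunov function on the axes. -/
noncomputable def ff (β α : ℝ) (i : ℕ) : ℝ :=
  2 + ∑ k ∈ Finset.Icc 2 i, ((k : ℝ)) ^ (β - α)

lemma ff_nonneg (hβα : β - α ≤ 0) (i : ℕ) : 0 ≤ ff β α i := by
  have : 0 ≤ ∑ k ∈ Finset.Icc 2 i, ((k : ℝ)) ^ (β - α) :=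
    Finset.sum_nonneg fun k _ => Real.rpow_nonneg (by positivity) _
  unfold ff; linarith

lemma two_le_ff (hβα : β - α ≤ 0) (i : ℕ) : 2 ≤ ff β α i := by
  have : 0 ≤ ∑ k ∈ Finset.Icc 2 i, ((k : ℝ)) ^ (β - α) :=
    Finset.sum_nonneg fun k _ => Real.rpow_nonneg (by positivity) _
  unfold ff; linarith

lemma ff_zero : ff β α 0 = 2 := by simp [ff]
lemma ff_one : ff β α 1 = 2 := by simp [ff]

lemma ff_succ (i : ℕ) (hi : 2 ≤ i + 1) : ff β α (i + 1) = ff β α i + ((i + 1 : ℕ) : ℝ) ^ (β - α) := by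
  unfold ff
  rw [Finset.sum_Icc_succ_top hi]
  ring

lemma rpow_nat_le_one (hβα : β - α ≤ 0) {i : ℕ} (hi : 1 ≤ i) : ((i : ℕ) : ℝ) ^ (β - α) ≤ 1 :=
  Real.rpow_le_one_of_one_le_of_nonpos (by exact_mod_cast hi) hβα

/-- The tail bound constant. -/
noncomputable def MM (β α : ℝ) : ℝ := 2 + ∑' k : ℕ, ((k : ℝ)) ^ (β - α)

lemma summable_rpow (hαβ : 1 < α - β) : Summable (fun k : ℕ => ((k : ℝ)) ^ (β - α)) :=
  Real.summable_nat_rpow.mpr (by linarith)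

lemma ff_le_MM (hαβ : 1 < α - β) (i : ℕ) : ff β α i ≤ MM β α := by
  unfold ff MM
  have := Summable.sum_le_tsum (Finset.Icc 2 i)
    (fun k _ => Real.rpow_nonneg (k.cast_nonneg) (β - α)) (summable_rpow hαβ)
  linarith

lemma MM_pos (hαβ : 1 < α - β) : 0 < MM β α := by
  unfold MM
  have : 0 ≤ ∑' k : ℕ, ((k : ℝ)) ^ (β - α) :=
    tsum_nonneg fun k => Real.rpow_nonneg (k.cast_nonneg) _
  linarith

/-- The key Lyapunov inequality at interior axis points. -/
lemma key_ineq (hα : 1 < α) (hβ : 0 < β) (hαβ : 1 < α - β) {i : ℕ} (hi : 1 ≤ i) :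
    (1 / (4 * ((i : ℝ)) ^ α)) * ff β α (i + 1)
      + 2 * (1 / (4 * ((i : ℝ)) ^ α)) * ((i : ℝ)) ^ β
      + (1 - 3 * (1 / (4 * ((i : ℝ)) ^ α))) * ff β α (i - 1) ≤ ff β α i := by
  have hβα : β - α ≤ 0 := by linarith
  have hi1 : (1 : ℝ) ≤ (i : ℝ) := by exact_mod_cast hi
  have hx : (1 : ℝ) ≤ ((i : ℝ)) ^ α := Real.one_le_rpow hi1 (by linarith)
  have hip : (0 : ℝ) < (i : ℝ) := by linarith
  set p : ℝ := 1 / (4 * ((i : ℝ)) ^ α) with hp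
  have hp0 : 0 < p := by positivity
  have hp4 : p ≤ 1 / 4 := by
    rw [hp]
    rw [div_le_div_iff₀ (by linarith) (by norm_num)]
    linarith
  -- 2 * p * i^β = i^(β-α) / 2
  have hpb : 2 * p * ((i : ℝ)) ^ β = ((i : ℝ)) ^ (β - α) / 2 := by
    rw [hp, Real.rpow_sub hip]
    field_simp
    ring
  rcases eq_or_lt_of_le hi with h1 | h2
  · -- i = 1
    have hieq : i = 1 := h1.symm
    subst hieq
    rw [ff_one, ff_zero, ff_succ 1 (by norm_num)]
    rw [ff_one]
    have h2le : ((2 : ℕ) : ℝ) ^ (β - α) ≤ 1 := rpow_nat_le_one hβα (by norm_num)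
    have h2ge : (0 : ℝ) ≤ ((2 : ℕ) : ℝ) ^ (β - α) := Real.rpow_nonneg (by norm_num) _
    have hb1 : ((1 : ℕ) : ℝ) ^ β = 1 := by
      norm_num
    rw [hb1]
    nlinarith
  · -- i ≥ 2
    have hi2 : 2 ≤ i := h2
    obtain ⟨j, rfl⟩ : ∃ j, i = j + 1 := ⟨i - 1, by omega⟩
    have hj1 : 1 ≤ j := by omega
    simp only [Nat.add_sub_cancel]
    have e1 : ff β α (j + 1) = ff β α j + ((j + 1 : ℕ) : ℝ) ^ (β - α) := ff_succ j (by omega)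
    have e2 : ff β α (j + 2) = ff β α (j + 1) + ((j + 2 : ℕ) : ℝ) ^ (β - α) := ff_succ (j + 1) (by omega)
    have d1le : ((j + 1 : ℕ) : ℝ) ^ (β - α) ≤ 1 := rpow_nat_le_one hβα (by omega)
    have d2le : ((j + 2 : ℕ) : ℝ) ^ (β - α) ≤ 1 := rpow_nat_le_one hβα (by omega)
    have d1ge : (0 : ℝ) ≤ ((j + 1 : ℕ) : ℝ) ^ (β - α) := Real.rpow_nonneg (by positivity) _
    have d2ge : (0 : ℝ) ≤ ((j + 2 : ℕ) : ℝ) ^ (β - α) := Real.rpow_nonneg (by positivity) _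
    have hffj : 2 ≤ ff β α j := two_le_ff hβα j
    -- goal: p * ff (j+2) + 2p (j+1)^β + (1 - 3p) * ff j ≤ ff (j+1)
    have key : 2 * p * (((j + 1 : ℕ)) : ℝ) ^ β ≤ ((j + 1 : ℕ) : ℝ) ^ (β - α) := by
      rw [hpb]; linarith [d1ge]
    nlinarith [mul_pos hp0 (lt_of_lt_of_le two_pos hffj)]

lemma natAbs_add_sign {a : ℤ} (ha : a ≠ 0) : (a + a.sign).natAbs = a.natAbs + 1 := by
  rcases ha.lt_or_gt with h | h
  · rw [Int.sign_eq_neg_one_iff_neg.mpr h]; omega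
  · rw [Int.sign_eq_one_iff_pos.mpr h]; omega

lemma natAbs_sub_sign {a : ℤ} (ha : a ≠ 0) : (a - a.sign).natAbs = a.natAbs - 1 := by
  rcases ha.lt_or_gt with h | h
  · rw [Int.sign_eq_neg_one_iff_neg.mpr h]; omega
  · rw [Int.sign_eq_one_iff_pos.mpr h]; omega

lemma sign_ne_zero {a : ℤ} (ha : a ≠ 0) : a.sign ≠ 0 := by
  rcases ha.lt_or_gt with h | h
  · rw [Int.sign_eq_neg_one_iff_neg.mpr h]; norm_num
  · rw [Int.sign_eq_one_iff_pos.mpr h]; norm_num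

lemma onorm_mk_zero (x : ℤ) : onorm (x, 0) = x.natAbs := by simp [onorm]
lemma onorm_zero_mk (x : ℤ) : onorm (0, x) = x.natAbs := by simp [onorm]
lemma onorm_swap (w : ℤ × ℤ) : onorm (Prod.swap w) = onorm w := by
  cases w; simp [onorm, Prod.swap]; exact max_comm _ _

lemma coneK_swap {w : ℤ × ℤ} : Prod.swap w ∈ coneK ↔ w ∈ coneK := by
  cases w; simp [coneK, Prod.swap]; tauto

/-- The one-step comparison function. -/
noncomputable def gv (β α : ℝ) (w : ℤ × ℤ) : ℝ≥0∞ :=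
  if w ∈ coneK then ENNReal.ofReal (((onorm w : ℝ)) ^ β)
  else ENNReal.ofReal (ff β α (onorm w))

lemma gv_swap (w : ℤ × ℤ) : gv β α (Prod.swap w) = gv β α w := by
  unfold gv; rw [onorm_swap]; exact if_congr coneK_swap rfl rfl

/-- `q` at interior axis points, evaluated. -/
lemma q_axis_out {a : ℤ} (ha : a ≠ 0) :
    q α (a, 0) (a + a.sign, 0) = 1 / (4 * ((a.natAbs : ℝ)) ^ α) := by
  rw [q, if_pos ⟨rfl, ha⟩, if_pos (Or.inl rfl)]

lemma q_axis_side1 {a : ℤ} (ha : a ≠ 0) :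
    q α (a, 0) (a, 1) = 1 / (4 * ((a.natAbs : ℝ)) ^ α) := by
  rw [q, if_pos ⟨rfl, ha⟩, if_pos (Or.inr (Or.inl rfl))]

lemma q_axis_side2 {a : ℤ} (ha : a ≠ 0) :
    q α (a, 0) (a, -1) = 1 / (4 * ((a.natAbs : ℝ)) ^ α) := by
  rw [q, if_pos ⟨rfl, ha⟩, if_pos (Or.inr (Or.inr rfl))]

lemma q_axis_in {a : ℤ} (ha : a ≠ 0) :
    q α (a, 0) (a - a.sign, 0) = 1 - 3 / (4 * ((a.natAbs : ℝ)) ^ α) := by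
  have hs := sign_ne_zero ha
  rw [q, if_pos ⟨rfl, ha⟩, if_neg, if_pos rfl]
  rintro (h | h | h) <;> rw [Prod.mk.injEq] at h
  · have h1 : a - a.sign = a + a.sign := h.1
    omega
  · exact one_ne_zero h.2.symm
  · exact absurd h.2 (by norm_num)

lemma q_axis_zero {a : ℤ} (ha : a ≠ 0) {w : ℤ × ℤ}
    (hw : w ∉ ({(a + a.sign, 0), (a - a.sign, 0), (a, 1), (a, -1)} : Finset (ℤ × ℤ))) :
    q α (a, 0) w = 0 := by
  simp only [Finset.mem_insert, Finset.mem_singleton, not_or] at hw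
  rw [q, if_pos ⟨rfl, ha⟩, if_neg, if_neg]
  · exact hw.2.1
  · rintro (h | h | h)
    · exact hw.1 h
    · exact hw.2.2.1 h
    · exact hw.2.2.2 h

lemma q_origin_zero {w : ℤ × ℤ}
    (hw : w ∉ ({((1 : ℤ), (0 : ℤ)), (-1, 0), (0, 1), (0, -1)} : Finset (ℤ × ℤ))) :
    q α (0, 0) w = 0 := by
  simp only [Finset.mem_insert, Finset.mem_singleton, not_or] at hw
  rw [q, if_neg (by simp), if_neg (by simp), if_neg]
  intro hadj
  obtain ⟨c, d⟩ := w
  unfold adj at hadj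
  simp only at hadj
  obtain ⟨h1, h2, h3, h4⟩ := hw
  rw [Prod.mk.injEq] at h1 h2 h3 h4
  omega

lemma q_origin_adj {w : ℤ × ℤ}
    (hw : w ∈ ({((1 : ℤ), (0 : ℤ)), (-1, 0), (0, 1), (0, -1)} : Finset (ℤ × ℤ))) :
    q α (0, 0) w = 1 / 4 := by
  have hadj : adj (0, 0) w := by
    fin_cases hw <;> (unfold adj; omega)
  rw [q, if_neg (by simp), if_neg (by simp), if_pos hadj]

lemma ofReal_comb {p1 p2 p3 p4 f1 f2 f3 f4 c : ℝ}
    (hp1 : 0 ≤ p1) (hp2 : 0 ≤ p2) (hp3 : 0 ≤ p3) (hp4 : 0 ≤ p4)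
    (hf1 : 0 ≤ f1) (hf2 : 0 ≤ f2) (hf3 : 0 ≤ f3) (hf4 : 0 ≤ f4)
    (h : p1 * f1 + p2 * f2 + p3 * f3 + p4 * f4 ≤ c) :
    ENNReal.ofReal p1 * ENNReal.ofReal f1 + (ENNReal.ofReal p2 * ENNReal.ofReal f2 +
      (ENNReal.ofReal p3 * ENNReal.ofReal f3 + ENNReal.ofReal p4 * ENNReal.ofReal f4))
      ≤ ENNReal.ofReal c := by
  rw [← ENNReal.ofReal_mul hp1, ← ENNReal.ofReal_mul hp2, ← ENNReal.ofReal_mul hp3,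
      ← ENNReal.ofReal_mul hp4,
      ← ENNReal.ofReal_add (mul_nonneg hp3 hf3) (mul_nonneg hp4 hf4),
      ← ENNReal.ofReal_add (mul_nonneg hp2 hf2)
        (add_nonneg (mul_nonneg hp3 hf3) (mul_nonneg hp4 hf4)),
      ← ENNReal.ofReal_add (mul_nonneg hp1 hf1)
        (add_nonneg (mul_nonneg hp2 hf2)
          (add_nonneg (mul_nonneg hp3 hf3) (mul_nonneg hp4 hf4)))]
  exact ENNReal.ofReal_le_ofReal (by linarith)

lemma step_axis (hα : 1 < α) (hβ : 0 < β) (hαβ : 1 < α - β) {a : ℤ} (ha : a ≠ 0) :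
    (∑' w : ℤ × ℤ, ENNReal.ofReal (q α (a, 0) w) * gv β α w)
      ≤ ENNReal.ofReal (ff β α (onorm (a, 0))) := by
  have hα0 : (0 : ℝ) ≤ α := by linarith
  have hβα : β - α ≤ 0 := by linarith
  have hsgn := sign_ne_zero ha
  have hi : 1 ≤ a.natAbs := Int.natAbs_pos.mpr ha
  have hzero : ∀ w ∉ ({(a + a.sign, 0), (a - a.sign, 0), (a, 1), (a, -1)} : Finset (ℤ × ℤ)),
      ENNReal.ofReal (q α (a, 0) w) * gv β α w = 0 := by
    intro w hw; rw [q_axis_zero ha hw]; simp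
  rw [tsum_eq_sum hzero]
  have e1 : ((a + a.sign, 0) : ℤ × ℤ) ∉ ({(a - a.sign, 0), (a, 1), (a, -1)} : Finset (ℤ × ℤ)) := by
    simp only [Finset.mem_insert, Finset.mem_singleton, Prod.mk.injEq, not_or]
    refine ⟨fun h => ?_, fun h => ?_, fun h => ?_⟩ <;> omega
  have e2 : ((a - a.sign, 0) : ℤ × ℤ) ∉ ({(a, 1), (a, -1)} : Finset (ℤ × ℤ)) := by
    simp only [Finset.mem_insert, Finset.mem_singleton, Prod.mk.injEq, not_or]
    refine ⟨fun h => ?_, fun h => ?_⟩ <;> omega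
  have e3 : ((a, 1) : ℤ × ℤ) ∉ ({(a, -1)} : Finset (ℤ × ℤ)) := by
    simp only [Finset.mem_singleton, Prod.mk.injEq, not_and]
    intro _; omega
  rw [show ({(a + a.sign, 0), (a - a.sign, 0), (a, 1), (a, -1)} : Finset (ℤ × ℤ))
      = insert (a + a.sign, 0) (insert (a - a.sign, 0) (insert (a, 1) {(a, -1)})) from rfl,
    Finset.sum_insert e1, Finset.sum_insert e2, Finset.sum_insert e3, Finset.sum_singleton]
  have g1 : gv β α (a + a.sign, 0) = ENNReal.ofReal (ff β α (a.natAbs + 1)) := by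
    rw [gv, if_neg (by simp [coneK]), onorm_mk_zero, natAbs_add_sign ha]
  have g2 : gv β α (a - a.sign, 0) = ENNReal.ofReal (ff β α (a.natAbs - 1)) := by
    rw [gv, if_neg (by simp [coneK]), onorm_mk_zero, natAbs_sub_sign ha]
  have hmax : max a.natAbs (1 : ℤ).natAbs = a.natAbs := by
    simp only [Int.natAbs_one]; omega
  have g3 : gv β α (a, 1) = ENNReal.ofReal (((a.natAbs : ℝ)) ^ β) := by
    rw [gv, if_pos (show (a, (1 : ℤ)) ∈ coneK from ⟨ha, by norm_num⟩)]
    congr 2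
    have honorm : onorm (a, 1) = a.natAbs := by
      simp only [onorm, Int.natAbs_one]; omega
    rw [honorm]
  have g4 : gv β α (a, -1) = ENNReal.ofReal (((a.natAbs : ℝ)) ^ β) := by
    rw [gv, if_pos (show (a, (-1 : ℤ)) ∈ coneK from ⟨ha, by norm_num⟩)]
    congr 2
    have honorm : onorm (a, -1) = a.natAbs := by
      simp only [onorm, Int.natAbs_neg, Int.natAbs_one]; omega
    rw [honorm]
  rw [q_axis_out ha, q_axis_in ha, q_axis_side1 ha, q_axis_side2 ha, g1, g2, g3, g4,
    onorm_mk_zero]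
  have hx : (1 : ℝ) ≤ ((a.natAbs : ℝ)) ^ α := one_le_rpow_natAbs hα0 ha
  apply ofReal_comb (by positivity) (sub_three_div_nonneg hα0 ha) (by positivity) (by positivity)
    (ff_nonneg hβα _) (ff_nonneg hβα _) (Real.rpow_nonneg (by positivity) _)
    (Real.rpow_nonneg (by positivity) _)
  have hk := key_ineq hα hβ hαβ hi
  have heq : 1 / (4 * ((a.natAbs : ℝ)) ^ α) * ff β α (a.natAbs + 1)
      + (1 - 3 / (4 * ((a.natAbs : ℝ)) ^ α)) * ff β α (a.natAbs - 1)
      + 1 / (4 * ((a.natAbs : ℝ)) ^ α) * ((a.natAbs : ℝ)) ^ β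
      + 1 / (4 * ((a.natAbs : ℝ)) ^ α) * ((a.natAbs : ℝ)) ^ β
      = (1 / (4 * ((a.natAbs : ℝ)) ^ α)) * ff β α (a.natAbs + 1)
      + 2 * (1 / (4 * ((a.natAbs : ℝ)) ^ α)) * ((a.natAbs : ℝ)) ^ β
      + (1 - 3 * (1 / (4 * ((a.natAbs : ℝ)) ^ α))) * ff β α (a.natAbs - 1) := by
    ring
  rw [heq]
  exact hk

lemma step_origin (hα : 1 < α) (hβ : 0 < β) (hαβ : 1 < α - β) :
    (∑' w : ℤ × ℤ, ENNReal.ofReal (q α (0, 0) w) * gv β α w)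
      ≤ ENNReal.ofReal (ff β α (onorm ((0 : ℤ), (0 : ℤ)))) := by
  have hβα : β - α ≤ 0 := by linarith
  have hzero : ∀ w ∉ ({((1 : ℤ), (0 : ℤ)), (-1, 0), (0, 1), (0, -1)} : Finset (ℤ × ℤ)),
      ENNReal.ofReal (q α (0, 0) w) * gv β α w = 0 := by
    intro w hw; rw [q_origin_zero hw]; simp
  rw [tsum_eq_sum hzero]
  have hg : ∀ w ∈ ({((1 : ℤ), (0 : ℤ)), (-1, 0), (0, 1), (0, -1)} : Finset (ℤ × ℤ)),
      ENNReal.ofReal (q α (0, 0) w) * gv β α w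
        = ENNReal.ofReal ((1 / 4) * ff β α 1) := by
    intro w hw
    rw [q_origin_adj hw, ENNReal.ofReal_mul (by norm_num)]
    congr 1
    fin_cases hw <;>
      · rw [gv, if_neg (by simp [coneK])]
        norm_num [onorm]
  rw [Finset.sum_congr rfl hg]
  rw [Finset.sum_const]
  have hcard : ({((1 : ℤ), (0 : ℤ)), (-1, 0), (0, 1), (0, -1)} : Finset (ℤ × ℤ)).card = 4 := by
    decide
  rw [hcard, show onorm ((0 : ℤ), (0 : ℤ)) = 0 from rfl]
  have hff1 : (0 : ℝ) ≤ (1 / 4) * ff β α 1 := by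
    have := two_le_ff hβα 1; linarith
  calc (4 : ℕ) • ENNReal.ofReal ((1 / 4) * ff β α 1)
      = ENNReal.ofReal ((1 / 4) * ff β α 1) * 4 := by
        rw [nsmul_eq_mul]; ring
    _ = ENNReal.ofReal ((1 / 4) * ff β α 1 * 4) := by
        rw [ENNReal.ofReal_mul hff1]
        norm_num
    _ ≤ ENNReal.ofReal (ff β α 0) := by
        apply ENNReal.ofReal_le_ofReal
        rw [ff_one, ff_zero]; norm_num

lemma step (hα : 1 < α) (hβ : 0 < β) (hαβ : 1 < α - β) {z : ℤ × ℤ} (hz : z ∉ coneK) :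
    (∑' w : ℤ × ℤ, ENNReal.ofReal (q α z w) * gv β α w)
      ≤ ENNReal.ofReal (ff β α (onorm z)) := by
  obtain ⟨a, b⟩ := z
  rw [not_coneK_iff] at hz
  simp only at hz
  rcases hz with ha | hb
  · subst ha
    by_cases hb0 : b = 0
    · subst hb0; exact step_origin hα hβ hαβ
    · have h1 : (∑' w : ℤ × ℤ, ENNReal.ofReal (q α (0, b) w) * gv β α w)
          = ∑' v : ℤ × ℤ, ENNReal.ofReal (q α (b, 0) v) * gv β α v := by
        rw [← (Equiv.prodComm ℤ ℤ).tsum_eq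
          (fun w => ENNReal.ofReal (q α ((0 : ℤ), b) w) * gv β α w)]
        apply tsum_congr
        intro v
        show ENNReal.ofReal (q α (0, b) (Prod.swap v)) * gv β α (Prod.swap v) = _
        rw [show ((0 : ℤ), b) = Prod.swap (b, 0) from rfl, q_swap, gv_swap]
      rw [h1, show onorm (0, b) = onorm (b, 0) from by simp [onorm]]
      exact step_axis hα hβ hαβ hb0
  · subst hb
    by_cases ha0 : a = 0
    · subst ha0; exact step_origin hα hβ hαβ
    · exact step_axis hα hβ hαβ ha0

/-- A list is an admissible excursion: it enters the cone exactly at its last element. -/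
def okl : List (ℤ × ℤ) → Prop
  | [] => False
  | [w] => w ∈ coneK
  | w :: x :: l => w ∉ coneK ∧ okl (x :: l)

lemma okl_cons {w : ℤ × ℤ} {l : List (ℤ × ℤ)} (hl : l ≠ []) :
    okl (w :: l) ↔ w ∉ coneK ∧ okl l := by
  cases l with
  | nil => exact absurd rfl hl
  | cons x l => rfl

lemma okl_ne_nil {l : List (ℤ × ℤ)} (h : okl l) : l ≠ [] := by
  cases l with
  | nil => exact absurd h (by simp [okl])
  | cons x l => simp

/-- Weight of a path starting at `z` through the list `l`. -/
noncomputable def wtR (α : ℝ) : ℤ × ℤ → List (ℤ × ℤ) → ℝ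
  | _, [] => 1
  | z, w :: l => q α z w * wtR α w l

lemma wtR_nonneg (hα : 0 ≤ α) (z : ℤ × ℤ) (l : List (ℤ × ℤ)) : 0 ≤ wtR α z l := by
  induction l generalizing z with
  | nil => norm_num [wtR]
  | cons w l ih => exact mul_nonneg (q_nonneg hα z w) (ih w)

lemma getLastD_cons_of_ne_nil {w d : ℤ × ℤ} {l : List (ℤ × ℤ)} (hl : l ≠ []) :
    (w :: l).getLastD d = l.getLastD d := by
  cases l with
  | nil => exact absurd rfl hl
  | cons x l => rfl

/-- Truncated total expected exit weight. -/
noncomputable def T (α β : ℝ) (N : ℕ) (z : ℤ × ℤ) : ℝ≥0∞ :=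
  ∑' l : List (ℤ × ℤ),
    if l.length ≤ N ∧ okl l then
      ENNReal.ofReal (((onorm (l.getLastD (0, 0)) : ℝ)) ^ β) * ENNReal.ofReal (wtR α z l)
    else 0

lemma T_zero (z : ℤ × ℤ) : T α β 0 z = 0 := by
  unfold T
  refine ENNReal.tsum_eq_zero.mpr fun l => ?_
  rw [if_neg]
  rintro ⟨h1, h2⟩
  exact okl_ne_nil h2 (List.length_eq_zero_iff.mp (Nat.le_zero.mp h1))

lemma T_succ (hα : 0 ≤ α) (N : ℕ) (z : ℤ × ℤ) :
    T α β (N + 1) z = ∑' w : ℤ × ℤ, ENNReal.ofReal (q α z w) *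
      (if w ∈ coneK then ENNReal.ofReal (((onorm w : ℝ)) ^ β) else T α β N w) := by
  unfold T
  rw [← Function.Injective.tsum_eq
    (g := fun p : (ℤ × ℤ) × List (ℤ × ℤ) => p.1 :: p.2)
    (fun p p' h => by
      simp only [List.cons.injEq] at h
      exact Prod.ext h.1 h.2)
    (fun l hl => by
      simp only [Function.mem_support] at hl
      rcases l with _ | ⟨w, l⟩
      · exact absurd (if_neg (fun h => okl_ne_nil h.2 rfl)) hl
      · exact ⟨(w, l), rfl⟩)]
  rw [ENNReal.tsum_prod (f := fun (w : ℤ × ℤ) (l : List (ℤ × ℤ)) =>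
    if (w :: l).length ≤ N + 1 ∧ okl (w :: l) then
      ENNReal.ofReal (((onorm ((w :: l).getLastD (0, 0)) : ℝ)) ^ β) *
        ENNReal.ofReal (wtR α z (w :: l))
    else 0)]
  refine tsum_congr fun w => ?_
  by_cases hw : w ∈ coneK
  · rw [if_pos hw]
    rw [tsum_eq_single ([] : List (ℤ × ℤ))]
    · rw [if_pos ⟨by simp, hw⟩]
      show ENNReal.ofReal (((onorm ((w :: []).getLastD (0,0)) : ℝ)) ^ β) *
        ENNReal.ofReal (q α z w * wtR α w []) = _
      rw [show ((w :: []).getLastD (0,0)) = w from rfl, show wtR α w [] = 1 from rfl, mul_one,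
        mul_comm]
    · intro l hl
      rw [if_neg]
      rintro ⟨-, h2⟩
      rw [okl_cons hl] at h2
      exact h2.1 hw
  · rw [if_neg hw]
    rw [← ENNReal.tsum_mul_left]
    refine tsum_congr fun l => ?_
    rcases eq_or_ne l [] with rfl | hl
    · rw [if_neg (fun h => hw h.2), if_neg (fun h => okl_ne_nil h.2 rfl), mul_zero]
    · rw [okl_cons hl, getLastD_cons_of_ne_nil hl,
        show wtR α z (w :: l) = q α z w * wtR α w l from rfl]
      by_cases hok : l.length ≤ N ∧ okl l
      · rw [if_pos ⟨by simpa using hok.1, hw, hok.2⟩, if_pos hok,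
          ENNReal.ofReal_mul (q_nonneg hα z w)]
        ring
      · rw [if_neg, if_neg hok, mul_zero]
        rintro ⟨h1, -, h3⟩
        exact hok ⟨by simpa using h1, h3⟩

lemma T_le (hα : 1 < α) (hβ : 0 < β) (hαβ : 1 < α - β) (N : ℕ) :
    ∀ z ∉ coneK, T α β N z ≤ ENNReal.ofReal (ff β α (onorm z)) := by
  induction N with
  | zero => intro z _; rw [T_zero]; exact zero_le
  | succ N ih =>
    intro z hz
    rw [T_succ (by linarith)]
    refine le_trans (ENNReal.tsum_le_tsum fun w => ?_) (step hα hβ hαβ hz)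
    unfold gv
    by_cases hw : w ∈ coneK
    · rw [if_pos hw, if_pos hw]
    · rw [if_neg hw, if_neg hw]
      exact mul_le_mul_right (ih w hw) _

lemma okl_iff : ∀ (l : List (ℤ × ℤ)), okl l ↔ l ≠ [] ∧
    (∀ i, i + 1 < l.length → l.getD i (0, 0) ∉ coneK) ∧ l.getLastD (0, 0) ∈ coneK
  | [] => by simp [okl]
  | [w] => by
      constructor
      · intro h
        exact ⟨by simp, fun i hi => absurd hi (by simp), h⟩
      · rintro ⟨-, -, h⟩
        exact h
  | w :: x :: m => by
      have ih := okl_iff (x :: m)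
      constructor
      · rintro ⟨hw, hok⟩
        obtain ⟨-, h2, h3⟩ := ih.mp hok
        refine ⟨by simp, ?_, ?_⟩
        · intro i hi
          cases i with
          | zero => exact hw
          | succ j =>
            rw [List.getD_cons_succ]
            exact h2 j (by simpa using hi)
        · rwa [getLastD_cons_of_ne_nil (by simp)]
      · rintro ⟨-, h2, h3⟩
        refine ⟨h2 0 (by simp), ih.mpr ⟨by simp, ?_, ?_⟩⟩
        · intro i hi
          have := h2 (i + 1) (by simpa using hi)
          rwa [List.getD_cons_succ] at this
        · rwa [getLastD_cons_of_ne_nil (by simp)] at h3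

lemma getLastD_eq_getD : ∀ (l : List (ℤ × ℤ)), l ≠ [] → ∀ d,
    l.getLastD d = l.getD (l.length - 1) d
  | [], h, d => absurd rfl h
  | [w], _, d => rfl
  | w :: x :: m, _, d => by
      rw [getLastD_cons_of_ne_nil (by simp), getLastD_eq_getD (x :: m) (by simp) d]
      rfl

lemma prod_getD (α : ℝ) : ∀ (l : List (ℤ × ℤ)) (z : ℤ × ℤ),
    (∏ i ∈ Finset.range l.length, q α ((z :: l).getD i (0, 0)) ((z :: l).getD (i + 1) (0, 0)))
      = wtR α z l
  | [], z => by simp [wtR]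
  | w :: l, z => by
      rw [show (w :: l).length = l.length + 1 from rfl, Finset.prod_range_succ']
      rw [show wtR α z (w :: l) = q α z w * wtR α w l from rfl]
      rw [← prod_getD α l w, mul_comm]
      rfl

lemma enters_unique {Ω : Type*} {X : ℕ → Ω → ℤ × ℤ} {n m : ℕ} {ω : Ω}
    (h1 : entersConeAt X n ω) (h2 : entersConeAt X m ω) : n = m := by
  by_contra hne
  rcases Nat.lt_or_ge n m with h | h
  · exact h2.2.2 n h1.1 h h1.2.1
  · exact h1.2.2 m h2.1 (lt_of_le_of_ne h (fun e => hne e.symm)) h2.2.1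

lemma Ttot_le (hα : 1 < α) (hβ : 0 < β) (hαβ : 1 < α - β) {z : ℤ × ℤ} (hz : z ∉ coneK) :
    (∑' l : List (ℤ × ℤ), if okl l then
        ENNReal.ofReal (((onorm (l.getLastD (0, 0)) : ℝ)) ^ β) * ENNReal.ofReal (wtR α z l)
      else 0) ≤ ENNReal.ofReal (MM β α) := by
  rw [ENNReal.tsum_eq_iSup_sum]
  refine iSup_le fun s => ?_
  have h1 : ∀ l ∈ s, (if okl l then
        ENNReal.ofReal (((onorm (l.getLastD (0, 0)) : ℝ)) ^ β) * ENNReal.ofReal (wtR α z l)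
      else 0) ≤ (if l.length ≤ s.sup List.length ∧ okl l then
        ENNReal.ofReal (((onorm (l.getLastD (0, 0)) : ℝ)) ^ β) * ENNReal.ofReal (wtR α z l)
      else 0) := by
    intro l hl
    by_cases h : okl l
    · rw [if_pos h, if_pos ⟨Finset.le_sup hl, h⟩]
    · rw [if_neg h, if_neg (fun hc => h hc.2)]
  calc ∑ l ∈ s, (if okl l then
          ENNReal.ofReal (((onorm (l.getLastD (0, 0)) : ℝ)) ^ β) * ENNReal.ofReal (wtR α z l)
        else 0)
      ≤ ∑ l ∈ s, (if l.length ≤ s.sup List.length ∧ okl l then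
          ENNReal.ofReal (((onorm (l.getLastD (0, 0)) : ℝ)) ^ β) * ENNReal.ofReal (wtR α z l)
        else 0) := Finset.sum_le_sum h1
    _ ≤ T α β (s.sup List.length) z :=
        Summable.sum_le_tsum s (fun _ _ => zero_le) ENNReal.summable
    _ ≤ ENNReal.ofReal (ff β α (onorm z)) := T_le hα hβ hαβ _ z hz
    _ ≤ ENNReal.ofReal (MM β α) := ENNReal.ofReal_le_ofReal (ff_le_MM hαβ _)

end ExitAux

/-- For `α > 1` and `0 < β` with `α - β > 1`, the `β`-th moment of the exit position
`‖X_ρ‖` is bounded uniformly over starting points `z ∈ K^c`. -/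
theorem exit_moment_bounded (α β : ℝ) (hα : 1 < α) (hβ : 0 < β) (hαβ : 1 < α - β)
    {Ω : Type*} [MeasurableSpace Ω] (W : PerturbedWalk α Ω) :
    ∃ M : ℝ, 0 < M ∧ ∀ z ∈ axesKc,
      ∑' y : ℤ × ℤ, ENNReal.ofReal ((onorm y : ℝ) ^ β) *
          W.P z {ω | ∃ n, entersConeAt W.X n ω ∧ W.X n ω = y}
        ≤ ENNReal.ofReal M := by
  classical
  refine ⟨ExitAux.MM β α, ExitAux.MM_pos hαβ, ?_⟩
  intro z hz
  have hzc : z ∉ coneK := ExitAux.axes_iff.mp hz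
  haveI := W.prob z
  -- measurability facts
  have msingle : ∀ (k : ℕ) (c : ℤ × ℤ), MeasurableSet {ω | W.X k ω = c} := fun k c =>
    W.meas k (measurableSet_singleton c)
  have mcone : ∀ k : ℕ, MeasurableSet {ω | W.X k ω ∈ coneK} := fun k =>
    W.meas k ((Set.to_countable coneK).measurableSet)
  set A : ℕ → (ℤ × ℤ) → Set Ω := fun n y => {ω | entersConeAt W.X n ω ∧ W.X n ω = y} with hA
  have mA : ∀ n y, MeasurableSet (A n y) := by
    intro n y
    have he : A n y = {ω | 0 < n} ∩ ({ω | W.X n ω ∈ coneK} ∩ ({ω | W.X n ω = y} ∩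
        ⋂ m, ⋂ (_ : 0 < m), ⋂ (_ : m < n), {ω | W.X m ω ∈ coneK}ᶜ)) := by
      ext ω
      simp only [hA, entersConeAt, Set.mem_setOf_eq, Set.mem_inter_iff, Set.mem_iInter,
        Set.mem_compl_iff]
      tauto
    rw [he]
    exact (MeasurableSet.const _).inter ((mcone n).inter ((msingle n y).inter
      (MeasurableSet.iInter fun m => MeasurableSet.iInter fun _ =>
        MeasurableSet.iInter fun _ => (mcone m).compl)))
  set D : List (ℤ × ℤ) → Set Ω := fun l =>
    {ω | W.X 0 ω = z ∧ ∀ i < l.length, W.X (i + 1) ω = l.getD i (0, 0)} with hD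
  have mD : ∀ l, MeasurableSet (D l) := by
    intro l
    have he : D l = {ω | W.X 0 ω = z} ∩
        ⋂ i, ⋂ (_ : i < l.length), {ω | W.X (i + 1) ω = l.getD i (0, 0)} := by
      ext ω
      simp only [hD, Set.mem_setOf_eq, Set.mem_inter_iff, Set.mem_iInter]
    rw [he]
    exact (msingle 0 z).inter (MeasurableSet.iInter fun i => MeasurableSet.iInter fun _ =>
      msingle (i + 1) _)
  -- cylinder probabilities
  have hPD : ∀ l, W.P z (D l) = ENNReal.ofReal (ExitAux.wtR α z l) := by
    intro l
    have hfdd := W.fdd z l.length (fun i => (z :: l).getD i (0, 0)) rfl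
    beta_reduce at hfdd
    have hset : {ω | ∀ i ≤ l.length, W.X i ω = (z :: l).getD i (0, 0)} = D l := by
      ext ω
      simp only [hD, Set.mem_setOf_eq]
      constructor
      · intro h
        refine ⟨h 0 (Nat.zero_le _), fun i hi => ?_⟩
        have h2 := h (i + 1) hi
        rwa [List.getD_cons_succ] at h2
      · rintro ⟨h0, h⟩ i hi
        cases i with
        | zero => exact h0
        | succ j =>
          rw [List.getD_cons_succ]
          exact h j (by omega)
    rw [hset, ExitAux.prod_getD] at hfdd
    rw [← ENNReal.ofReal_toReal (measure_ne_top (W.P z) (D l)), hfdd]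
  -- the starting point is a.s. z
  have hX0 : W.P z {ω | W.X 0 ω = z} = 1 := by
    have h := W.fdd z 0 (fun _ => z) rfl
    simp only [Finset.range_zero, Finset.prod_empty] at h
    have hset : {ω | ∀ i ≤ 0, W.X i ω = z} = {ω | W.X 0 ω = z} := by
      ext ω
      simp only [Set.mem_setOf_eq, Nat.le_zero, forall_eq]
    rw [hset] at h
    rw [← ENNReal.ofReal_toReal (measure_ne_top (W.P z) _), h, ENNReal.ofReal_one]
  have hnull : W.P z {ω | W.X 0 ω = z}ᶜ = 0 := by
    rw [measure_compl (msingle 0 z) (measure_ne_top _ _), hX0, measure_univ]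
    simp
  have hAinter : ∀ n y, W.P z (A n y) = W.P z (A n y ∩ {ω | W.X 0 ω = z}) := by
    intro n y
    refine le_antisymm ?_ (measure_mono Set.inter_subset_left)
    calc W.P z (A n y) ≤ W.P z ((A n y ∩ {ω | W.X 0 ω = z}) ∪ {ω | W.X 0 ω = z}ᶜ) :=
          measure_mono (fun ω hω => by
            by_cases h : W.X 0 ω = z
            · exact Or.inl ⟨hω, h⟩
            · exact Or.inr h)
      _ ≤ W.P z (A n y ∩ {ω | W.X 0 ω = z}) + W.P z {ω | W.X 0 ω = z}ᶜ :=
          measure_union_le _ _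
      _ = W.P z (A n y ∩ {ω | W.X 0 ω = z}) := by rw [hnull, add_zero]
  -- decomposition of A into cylinders
  have hAeq : ∀ n y, A n y ∩ {ω | W.X 0 ω = z}
      = ⋃ (l : {l : List (ℤ × ℤ) //
          l.length = n ∧ ExitAux.okl l ∧ l.getLastD (0, 0) = y}), D l.1 := by
    intro n y
    ext ω
    simp only [hA, hD, Set.mem_inter_iff, Set.mem_iUnion, Set.mem_setOf_eq]
    constructor
    · rintro ⟨⟨⟨hn, hcone, hmin⟩, hXn⟩, h0⟩
      set l : List (ℤ × ℤ) := (List.range n).map (fun i => W.X (i + 1) ω) with hl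
      have hlen : l.length = n := by simp [hl]
      have hget : ∀ i, i < n → l.getD i (0, 0) = W.X (i + 1) ω := by
        intro i hi
        rw [hl, List.getD_eq_getElem _ _ (by simpa using hi)]
        simp
      have hne : l ≠ [] := by
        intro hnil
        rw [hnil] at hlen
        simp at hlen
        omega
      have hlast : l.getLastD (0, 0) = W.X n ω := by
        rw [ExitAux.getLastD_eq_getD l hne, hlen, hget (n - 1) (by omega)]
        congr 1
        omega
      refine ⟨⟨l, hlen, ?_, by rw [hlast]; exact hXn⟩, h0, ?_⟩
      · rw [ExitAux.okl_iff]
        refine ⟨hne, ?_, ?_⟩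
        · intro i hi
          rw [hlen] at hi
          rw [hget i (by omega)]
          exact hmin (i + 1) (by omega) (by omega)
        · rw [hlast]; exact hcone
      · intro i hi
        rw [hlen] at hi
        exact (hget i hi).symm
    · rintro ⟨⟨l, hlen, hok, hlast⟩, h0, hsteps⟩
      replace hsteps : ∀ i < l.length, W.X (i + 1) ω = l.getD i (0, 0) := hsteps
      have hokk := (ExitAux.okl_iff l).mp hok
      have hlpos : 0 < l.length := List.length_pos_iff.mpr hokk.1
      have hn : 0 < n := hlen ▸ hlpos
      have hXn : W.X n ω = l.getLastD (0, 0) := by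
        have h1 := hsteps (n - 1) (by omega)
        rw [show n - 1 + 1 = n from by omega] at h1
        rw [h1, ExitAux.getLastD_eq_getD l hokk.1, hlen]
      refine ⟨⟨⟨hn, ?_, ?_⟩, ?_⟩, h0⟩
      · rw [hXn]; exact hokk.2.2
      · intro m hm0 hmn
        have h1 := hsteps (m - 1) (by omega)
        rw [show m - 1 + 1 = m from by omega] at h1
        rw [h1]
        exact hokk.2.1 (m - 1) (by omega)
      · rw [hXn, hlast]
  -- disjointness of cylinders
  have hDdisj : ∀ n y, Pairwise (Function.onFun Disjoint fun
      (l : {l : List (ℤ × ℤ) //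
        l.length = n ∧ ExitAux.okl l ∧ l.getLastD (0, 0) = y}) => D l.1) := by
    intro n y l l' hne
    refine Set.disjoint_left.mpr fun ω hω hω' => hne ?_
    obtain ⟨h0, hs⟩ := hω
    obtain ⟨h0', hs'⟩ := hω'
    apply Subtype.ext
    apply List.ext_getElem (by rw [l.2.1, l'.2.1])
    intro i hi hi'
    rw [← List.getD_eq_getElem l.1 (0, 0) hi, ← List.getD_eq_getElem l'.1 (0, 0) hi',
      ← hs i hi, ← hs' i hi']
  have hPA : ∀ n y, W.P z (A n y) = ∑' (l : {l : List (ℤ × ℤ) //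
      l.length = n ∧ ExitAux.okl l ∧ l.getLastD (0, 0) = y}),
        ENNReal.ofReal (ExitAux.wtR α z l.1) := by
    intro n y
    rw [hAinter n y, hAeq n y, measure_iUnion (hDdisj n y) (fun l => mD l.1)]
    exact tsum_congr fun l => hPD l.1
  -- first-entrance decomposition in time
  have hPE : ∀ y, W.P z {ω | ∃ n, entersConeAt W.X n ω ∧ W.X n ω = y}
      = ∑' n : ℕ, W.P z (A n y) := by
    intro y
    rw [show {ω | ∃ n, entersConeAt W.X n ω ∧ W.X n ω = y} = ⋃ n, A n y from
      Set.setOf_exists _]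
    exact measure_iUnion (fun n m hnm => Set.disjoint_left.mpr fun ω h1 h2 =>
      hnm (ExitAux.enters_unique h1.1 h2.1)) (fun n => mA n y)
  -- assemble everything
  calc ∑' y : ℤ × ℤ, ENNReal.ofReal ((onorm y : ℝ) ^ β) *
        W.P z {ω | ∃ n, entersConeAt W.X n ω ∧ W.X n ω = y}
      = ∑' (y : ℤ × ℤ) (n : ℕ) (l : List (ℤ × ℤ)),
          (if l.length = n ∧ ExitAux.okl l ∧ l.getLastD (0, 0) = y then
            ENNReal.ofReal ((onorm y : ℝ) ^ β) * ENNReal.ofReal (ExitAux.wtR α z l)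
          else 0) := by
        refine tsum_congr fun y => ?_
        rw [hPE y, ← ENNReal.tsum_mul_left]
        refine tsum_congr fun n => ?_
        rw [hPA n y, ← ENNReal.tsum_mul_left]
        have hinj : Function.Injective (Subtype.val : {l : List (ℤ × ℤ) //
            l.length = n ∧ ExitAux.okl l ∧ l.getLastD (0, 0) = y} → List (ℤ × ℤ)) :=
          Subtype.val_injective
        have hsupp : Function.support (fun l : List (ℤ × ℤ) =>
            if l.length = n ∧ ExitAux.okl l ∧ l.getLastD (0, 0) = y then
              ENNReal.ofReal ((onorm y : ℝ) ^ β) * ENNReal.ofReal (ExitAux.wtR α z l)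
            else 0) ⊆ Set.range (Subtype.val : {l : List (ℤ × ℤ) //
            l.length = n ∧ ExitAux.okl l ∧ l.getLastD (0, 0) = y} → List (ℤ × ℤ)) := by
          intro l hl
          simp only [Function.mem_support] at hl
          by_contra hmem
          exact hl (if_neg (fun h => hmem ⟨⟨l, h⟩, rfl⟩))
        rw [← Function.Injective.tsum_eq hinj hsupp]
        exact tsum_congr fun l => (if_pos l.2).symm
    _ = ∑' (l : List (ℤ × ℤ)) (y : ℤ × ℤ) (n : ℕ),
          (if l.length = n ∧ ExitAux.okl l ∧ l.getLastD (0, 0) = y then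
            ENNReal.ofReal ((onorm y : ℝ) ^ β) * ENNReal.ofReal (ExitAux.wtR α z l)
          else 0) := by
        rw [show (∑' (y : ℤ × ℤ) (n : ℕ) (l : List (ℤ × ℤ)),
            (if l.length = n ∧ ExitAux.okl l ∧ l.getLastD (0, 0) = y then
              ENNReal.ofReal ((onorm y : ℝ) ^ β) * ENNReal.ofReal (ExitAux.wtR α z l)
            else 0)) = ∑' (y : ℤ × ℤ) (l : List (ℤ × ℤ)) (n : ℕ),
            (if l.length = n ∧ ExitAux.okl l ∧ l.getLastD (0, 0) = y then
              ENNReal.ofReal ((onorm y : ℝ) ^ β) * ENNReal.ofReal (ExitAux.wtR α z l)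
            else 0) from tsum_congr fun y => ENNReal.tsum_comm]
        exact ENNReal.tsum_comm
    _ = ∑' (l : List (ℤ × ℤ)),
          (if ExitAux.okl l then
            ENNReal.ofReal ((onorm (l.getLastD (0, 0)) : ℝ) ^ β) *
              ENNReal.ofReal (ExitAux.wtR α z l)
          else 0) := by
        refine tsum_congr fun l => ?_
        rw [tsum_eq_single (l.getLastD (0, 0)) (fun y' hy' =>
          ENNReal.tsum_eq_zero.mpr fun n => if_neg fun h => hy' h.2.2.symm)]
        rw [tsum_eq_single l.length (fun n hn => if_neg fun h => hn h.1.symm)]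
        by_cases h : ExitAux.okl l
        · rw [if_pos ⟨rfl, h, rfl⟩, if_pos h]
        · rw [if_neg (fun hc => h hc.2.1), if_neg h]
    _ ≤ ENNReal.ofReal (ExitAux.MM β α) := ExitAux.Ttot_le hα hβ hαβ hzc

end
end
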